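/- arXiv:1211.5611 — 8 statements merged into one kernel-verified Lean document; each statement's English description precedes it below -/
import Mathlib

section
/- Let Assumptions on the network and weights hold (network connectivity with window Q and doubly stochastic weight matrices with entries bounded below by η on edges). Then the matrix products Φ(k,s) = W(k)W(k−1)⋯W(s) satisfy lim_{k→∞} Φ(k,s) = (1/m)ee^T for every s ≥ 0, where e ∈ ℝ^m is the vector of all ones. -/
open Filter

/-- `Phi W s n` is the backward matrix product `W(s+n) ⋯ W(s+1) W(s)`,
i.e. `Φ(k, s)` of the paper with `k = s + n`. -/
def Phi {m : ℕ} (W : ℕ → Matrix (Fin m) (Fin m) ℝ) (s : ℕ) : ℕ → Matrix (Fin m) (Fin m) ℝ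
  | 0 => W s
  | n + 1 => W (s + n + 1) * Phi W s n

section PhiAux
open Finset

/-- Forward product: `Pr W a n = W(a+n-1) ⋯ W(a+1) W(a)`, with `Pr W a 0 = 1`. -/
def Pr {m : ℕ} (W : ℕ → Matrix (Fin m) (Fin m) ℝ) (a : ℕ) : ℕ → Matrix (Fin m) (Fin m) ℝ
  | 0 => 1
  | n + 1 => W (a + n) * Pr W a n

lemma Pr_add {m : ℕ} (W : ℕ → Matrix (Fin m) (Fin m) ℝ) (a n k : ℕ) :
    Pr W a (n + k) = Pr W (a + k) n * Pr W a k := by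
  induction n with
  | zero => simp [Pr]
  | succ n ih =>
      have h : n + 1 + k = (n + k) + 1 := by omega
      rw [h]
      show W (a + (n + k)) * Pr W a (n + k) = _
      rw [ih]
      show _ = W (a + k + n) * Pr W (a + k) n * Pr W a k
      have h2 : a + (n + k) = a + k + n := by omega
      rw [h2, Matrix.mul_assoc]

lemma Phi_eq_Pr {m : ℕ} (W : ℕ → Matrix (Fin m) (Fin m) ℝ) (s : ℕ) :
    ∀ n, Phi W s n = Pr W s (n + 1) := by
  intro n
  induction n with
  | zero => show W s = W (s + 0) * Pr W s 0; simp [Pr]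
  | succ n ih =>
      show W (s + n + 1) * Phi W s n = W (s + (n + 1)) * Pr W s (n + 1)
      rw [ih]
      rfl

lemma Pr_nonneg {m : ℕ} (W : ℕ → Matrix (Fin m) (Fin m) ℝ) (hW0 : ∀ k i j, 0 ≤ W k i j) (a : ℕ) :
    ∀ n i j, 0 ≤ Pr W a n i j := by
  intro n
  induction n with
  | zero =>
      intro i j
      show (0:ℝ) ≤ (1 : Matrix (Fin m) (Fin m) ℝ) i j
      by_cases h : i = j <;> simp [Matrix.one_apply, h]
  | succ n ih =>
      intro i j
      show (0:ℝ) ≤ (W (a + n) * Pr W a n) i j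
      rw [Matrix.mul_apply]
      exact Finset.sum_nonneg fun p _ => mul_nonneg (hW0 _ _ _) (ih p j)

lemma Pr_row {m : ℕ} (W : ℕ → Matrix (Fin m) (Fin m) ℝ) (hrow : ∀ k i, ∑ j, W k i j = 1) (a : ℕ) :
    ∀ n i, ∑ j, Pr W a n i j = 1 := by
  intro n
  induction n with
  | zero => intro i; simp [Pr, Matrix.one_apply]
  | succ n ih =>
      intro i
      show ∑ j, (W (a + n) * Pr W a n) i j = 1
      simp only [Matrix.mul_apply]
      rw [Finset.sum_comm]
      calc ∑ p, ∑ j, W (a + n) i p * Pr W a n p j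
          = ∑ p, W (a + n) i p * ∑ j, Pr W a n p j :=
            Finset.sum_congr rfl fun p _ => (Finset.mul_sum _ _ _).symm
        _ = 1 := by
            simp only [ih]
            simpa using hrow (a + n) i

lemma Pr_col {m : ℕ} (W : ℕ → Matrix (Fin m) (Fin m) ℝ) (hcol : ∀ k j, ∑ i, W k i j = 1) (a : ℕ) :
    ∀ n j, ∑ i, Pr W a n i j = 1 := by
  intro n
  induction n with
  | zero => intro j; simp [Pr, Matrix.one_apply]
  | succ n ih =>
      intro j
      show ∑ i, (W (a + n) * Pr W a n) i j = 1
      simp only [Matrix.mul_apply]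
      rw [Finset.sum_comm]
      calc ∑ p, ∑ i, W (a + n) i p * Pr W a n p j
          = ∑ p, (∑ i, W (a + n) i p) * Pr W a n p j :=
            Finset.sum_congr rfl fun p _ => (Finset.sum_mul _ _ _).symm
        _ = 1 := by
            simp only [hcol]
            simpa using ih j

lemma exists_crossing {α : Type*} (R : α → α → Prop) (S : α → Prop) :
    ∀ {i j : α}, Relation.ReflTransGen R i j → ¬ S i → S j → ∃ u w, ¬ S u ∧ S w ∧ R u w := by
  intro i j h
  induction h using Relation.ReflTransGen.head_induction_on with
  | refl => intro hi hj; exact absurd hj hi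
  | @head u c hac hcb ih =>
      intro hi hj
      by_cases hc : S c
      · exact ⟨_, _, hi, hc, hac⟩
      · exact ih hc hj

lemma contraction_aux {m : ℕ} (hne : (univ : Finset (Fin m)).Nonempty)
    (A : Matrix (Fin m) (Fin m) ℝ) (x : Fin m → ℝ) (δ : ℝ)
    (hA : ∀ i p, δ ≤ A i p) (hArow : ∀ i, ∑ p, A i p = 1) :
    univ.sup' hne (fun i => ∑ p, A i p * x p) - univ.inf' hne (fun i => ∑ p, A i p * x p)
      ≤ (1 - m * δ) * (univ.sup' hne x - univ.inf' hne x) := by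
  set M := univ.sup' hne x with hM
  set μ := univ.inf' hne x with hμ
  have hsumA : ∀ i : Fin m, ∑ p, (A i p - δ) = 1 - m * δ := by
    intro i
    rw [Finset.sum_sub_distrib, hArow i, Finset.sum_const, Finset.card_univ, Fintype.card_fin,
      nsmul_eq_mul]
  have hupper : ∀ i, ∑ p, A i p * x p ≤ δ * (∑ p, x p) + (1 - m * δ) * M := by
    intro i
    have e : ∑ p, A i p * x p = δ * (∑ p, x p) + ∑ p, (A i p - δ) * x p := by
      rw [Finset.mul_sum, ← Finset.sum_add_distrib]
      exact Finset.sum_congr rfl fun p _ => by ring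
    rw [e]
    have h2 : ∑ p, (A i p - δ) * x p ≤ ∑ p, (A i p - δ) * M :=
      Finset.sum_le_sum fun p _ =>
        mul_le_mul_of_nonneg_left (Finset.le_sup' x (mem_univ p)) (sub_nonneg.2 (hA i p))
    have h3 : ∑ p, (A i p - δ) * M = (1 - m * δ) * M := by rw [← Finset.sum_mul, hsumA]
    linarith
  have hlower : ∀ i, δ * (∑ p, x p) + (1 - m * δ) * μ ≤ ∑ p, A i p * x p := by
    intro i
    have e : ∑ p, A i p * x p = δ * (∑ p, x p) + ∑ p, (A i p - δ) * x p := by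
      rw [Finset.mul_sum, ← Finset.sum_add_distrib]
      exact Finset.sum_congr rfl fun p _ => by ring
    rw [e]
    have h2 : ∑ p, (A i p - δ) * μ ≤ ∑ p, (A i p - δ) * x p :=
      Finset.sum_le_sum fun p _ =>
        mul_le_mul_of_nonneg_left (Finset.inf'_le x (mem_univ p)) (sub_nonneg.2 (hA i p))
    have h3 : ∑ p, (A i p - δ) * μ = (1 - m * δ) * μ := by rw [← Finset.sum_mul, hsumA]
    linarith
  have h4 : univ.sup' hne (fun i => ∑ p, A i p * x p) ≤ δ * (∑ p, x p) + (1 - m * δ) * M :=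
    Finset.sup'_le hne _ fun i _ => hupper i
  have h5 : δ * (∑ p, x p) + (1 - m * δ) * μ ≤ univ.inf' hne (fun i => ∑ p, A i p * x p) :=
    Finset.le_inf' hne _ fun i _ => hlower i
  have hr : (1 - m * δ) * (M - μ) = (1 - m * δ) * M - (1 - m * δ) * μ := by ring
  linarith

lemma Pr_entries_pos {m : ℕ} (hm : 0 < m)
    (Ed : ℕ → Fin m → Fin m → Prop) (W : ℕ → Matrix (Fin m) (Fin m) ℝ)
    (hself : ∀ k i, Ed k i i) (hW0 : ∀ k i j, 0 ≤ W k i j)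
    (hWsupp : ∀ k i j, ¬ Ed k i j → W k i j = 0)
    (η : ℝ) (hη0 : 0 < η)
    (hWη : ∀ k i j, Ed k i j → η ≤ W k i j)
    (Q : ℕ)
    (hconn : ∀ k, ∀ i j : Fin m,
      Relation.ReflTransGen (fun u w => ∃ ℓ < Q, Ed (k + ℓ) u w) i j)
    (a : ℕ) (j : Fin m) :
    ∀ i, η ^ ((m - 1) * Q + 1) ≤ Pr W a ((m - 1) * Q + 1) i j := by
  set c : ℕ → Fin m → ℝ := fun n i => Pr W a n i j with hc
  have hc0 : ∀ n i, 0 ≤ c n i := fun n i => Pr_nonneg W hW0 a n i j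
  have hstep : ∀ n i p, W (a + n) i p * c n p ≤ c (n + 1) i := by
    intro n i p
    have : c (n + 1) i = ∑ q, W (a + n) i q * c n q := by
      show (W (a + n) * Pr W a n) i j = _
      rw [Matrix.mul_apply]
    rw [this]
    exact Finset.single_le_sum (f := fun q => W (a + n) i q * c n q)
      (fun q _ => mul_nonneg (hW0 _ _ _) (hc0 n q)) (mem_univ p)
  have P1 : ∀ n i, 0 < c n i → η ^ n ≤ c n i := by
    intro n
    induction n with
    | zero =>
        intro i hpos
        have h : c 0 i = (1 : Matrix (Fin m) (Fin m) ℝ) i j := rfl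
        rw [h] at hpos ⊢
        by_cases h' : i = j
        · simp [Matrix.one_apply, h']
        · simp [Matrix.one_apply, h'] at hpos
    | succ n ih =>
        intro i hpos
        have hsum : c (n + 1) i = ∑ q, W (a + n) i q * c n q := by
          show (W (a + n) * Pr W a n) i j = _
          rw [Matrix.mul_apply]
        have hex : ∃ q ∈ (univ : Finset (Fin m)), (0:ℝ) < W (a + n) i q * c n q := by
          apply Finset.exists_lt_of_sum_lt (f := fun _ => (0:ℝ))
          rw [← hsum]; simpa using hpos
        obtain ⟨q, -, hq⟩ := hex
        have hWpos : 0 < W (a + n) i q := by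
          rcases (mul_pos_iff.mp hq) with ⟨h1, _⟩ | ⟨h1, h2⟩
          · exact h1
          · exact absurd h2 (not_lt.mpr (hc0 n q))
        have hcq : 0 < c n q := by
          rcases (mul_pos_iff.mp hq) with ⟨_, h2⟩ | ⟨h1, _⟩
          · exact h2
          · exact absurd h1 (not_lt.mpr (hW0 _ _ _))
        have hEd : Ed (a + n) i q := by
          by_contra h
          exact absurd (hWsupp _ _ _ h) (ne_of_gt hWpos)
        calc η ^ (n + 1) = η * η ^ n := by ring
          _ ≤ W (a + n) i q * c n q :=
              mul_le_mul (hWη _ _ _ hEd) (ih q hcq) (pow_nonneg hη0.le n) (hW0 _ _ _)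
          _ ≤ c (n + 1) i := hstep n i q
  have P2 : ∀ n k i, 0 < c n i → 0 < c (n + k) i := by
    intro n k
    induction k with
    | zero => intro i h; exact h
    | succ k ih =>
        intro i h
        have h1 : 0 < c (n + k) i := ih i h
        have h2 : η * c (n + k) i ≤ W (a + (n + k)) i i * c (n + k) i :=
          mul_le_mul_of_nonneg_right (hWη _ _ _ (hself _ i)) (hc0 _ _)
        have h3 := hstep (n + k) i i
        exact lt_of_lt_of_le (mul_pos hη0 h1) (le_trans h2 h3)
  have P3 : ∀ n, 0 < c n j := by
    intro n
    have h0 : 0 < c 0 j := by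
      show (0:ℝ) < (1 : Matrix (Fin m) (Fin m) ℝ) j j
      simp [Matrix.one_apply]
    simpa using P2 0 n j h0
  have cross : ∀ n, (∃ i, ¬ 0 < c n i) → ∃ u, ¬ 0 < c n u ∧ 0 < c (n + Q) u := by
    intro n ⟨i, hi⟩
    obtain ⟨u, w, hu, hw, ℓ, hℓ, hEd⟩ :=
      exists_crossing (fun u w => ∃ ℓ < Q, Ed (a + n + ℓ) u w) (fun x => 0 < c n x)
        (hconn (a + n) i j) hi (P3 n)
    refine ⟨u, hu, ?_⟩
    have hw' : 0 < c (n + ℓ) w := P2 n ℓ w hw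
    have hWuw : η ≤ W (a + (n + ℓ)) u w := by
      have h : a + (n + ℓ) = a + n + ℓ := by omega
      rw [h]; exact hWη _ _ _ hEd
    have h1 : 0 < c (n + ℓ + 1) u :=
      lt_of_lt_of_le (mul_pos (lt_of_lt_of_le hη0 hWuw) hw') (hstep (n + ℓ) u w)
    have h2 := P2 (n + ℓ + 1) (Q - ℓ - 1) u h1
    have he : n + ℓ + 1 + (Q - ℓ - 1) = n + Q := by omega
    rwa [he] at h2
  have grow : ∀ t, min m (t + 1) ≤ (univ.filter (fun i => 0 < c (t * Q) i)).card := by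
    intro t
    induction t with
    | zero =>
        have hj : j ∈ univ.filter (fun i => 0 < c (0 * Q) i) := by
          simp [P3 0]
        have := Finset.card_pos.mpr ⟨j, hj⟩
        omega
    | succ t ih =>
        by_cases hall : ∀ i, 0 < c (t * Q) i
        · have h1 : ∀ i, 0 < c ((t + 1) * Q) i := by
            intro i
            have h2 := P2 (t * Q) Q i (hall i)
            have he : t * Q + Q = (t + 1) * Q := by ring
            rwa [he] at h2
          have h3 : univ.filter (fun i => 0 < c ((t + 1) * Q) i) = univ :=
            Finset.filter_true_of_mem fun i _ => h1 i
          rw [h3, Finset.card_univ, Fintype.card_fin]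
          omega
        · push_neg at hall
          obtain ⟨u, hu, hu'⟩ := cross (t * Q) (by
            obtain ⟨i, hi⟩ := hall
            exact ⟨i, not_lt.mpr hi⟩)
          have hsub : insert u (univ.filter (fun i => 0 < c (t * Q) i)) ⊆
              univ.filter (fun i => 0 < c ((t + 1) * Q) i) := by
            intro x hx
            rcases Finset.mem_insert.mp hx with rfl | hx
            · have he : t * Q + Q = (t + 1) * Q := by ring
              simp [← he, hu']
            · have hx' := (Finset.mem_filter.mp hx).2
              have h2 := P2 (t * Q) Q x hx'
              have he : t * Q + Q = (t + 1) * Q := by ring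
              simp [← he, h2]
          have hcard : (univ.filter (fun i => 0 < c (t * Q) i)).card + 1 ≤
              (univ.filter (fun i => 0 < c ((t + 1) * Q) i)).card := by
            have h1 := Finset.card_le_card hsub
            have h2 : (insert u (univ.filter (fun i => 0 < c (t * Q) i))).card =
                (univ.filter (fun i => 0 < c (t * Q) i)).card + 1 := by
              rw [Finset.card_insert_of_notMem]
              simp [hu]
            omega
          omega
  have full : ∀ i, 0 < c ((m - 1) * Q) i := by
    have h := grow (m - 1)
    have hmin : min m (m - 1 + 1) = m := by omega
    rw [hmin] at h
    have hle : (univ.filter (fun i => 0 < c ((m - 1) * Q) i)).card ≤ m := by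
      have := Finset.card_filter_le (univ : Finset (Fin m)) (fun i => 0 < c ((m - 1) * Q) i)
      simpa using this
    have heq : (univ.filter (fun i => 0 < c ((m - 1) * Q) i)) = univ := by
      apply Finset.eq_univ_of_card
      rw [Fintype.card_fin]; omega
    intro i
    have hmem : i ∈ univ.filter (fun i => 0 < c ((m - 1) * Q) i) := by
      rw [heq]; exact mem_univ i
    exact (Finset.mem_filter.mp hmem).2
  intro i
  have h1 : η ^ ((m - 1) * Q) ≤ c ((m - 1) * Q) i := P1 _ i (full i)
  have h2 : η * c ((m - 1) * Q) i ≤ W (a + (m - 1) * Q) i i * c ((m - 1) * Q) i :=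
    mul_le_mul_of_nonneg_right (hWη _ _ _ (hself _ i)) (hc0 _ _)
  calc η ^ ((m - 1) * Q + 1) = η * η ^ ((m - 1) * Q) := by ring
    _ ≤ η * c ((m - 1) * Q) i := mul_le_mul_of_nonneg_left h1 hη0.le
    _ ≤ W (a + (m - 1) * Q) i i * c ((m - 1) * Q) i := h2
    _ ≤ c ((m - 1) * Q + 1) i := hstep _ i i

end PhiAux

/-- **Convergence of the transition matrices** (Lemma 2(a)).
Under network connectivity (window `Q`) and doubly stochastic weights bounded below by
`η` on edges, `Φ(k, s) → (1/m) e eᵀ` as `k → ∞`, for every `s ≥ 0`. -/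
theorem Phi_tendsto_avg {m : ℕ} (hm : 0 < m)
    (Ed : ℕ → Fin m → Fin m → Prop)
    (W : ℕ → Matrix (Fin m) (Fin m) ℝ)
    (hself : ∀ k i, Ed k i i)
    (hW0 : ∀ k i j, 0 ≤ W k i j)
    (hWsupp : ∀ k i j, ¬ Ed k i j → W k i j = 0)
    (hrow : ∀ k i, ∑ j, W k i j = 1)
    (hcol : ∀ k j, ∑ i, W k i j = 1)
    (η : ℝ) (hη0 : 0 < η) (hη1 : η < 1)
    (hWη : ∀ k i j, Ed k i j → η ≤ W k i j)
    (Q : ℕ) (hQ : 1 ≤ Q)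
    (hconn : ∀ k, ∀ i j : Fin m,
      Relation.ReflTransGen (fun u w => ∃ ℓ < Q, Ed (k + ℓ) u w) i j) :
    ∀ s : ℕ, Tendsto (fun n => Phi W s n) atTop
      (nhds (Matrix.of fun _ _ => (m : ℝ)⁻¹)) := by
  intro s
  classical
  have hne : (Finset.univ : Finset (Fin m)).Nonempty := ⟨⟨0, hm⟩, Finset.mem_univ _⟩
  set L := (m - 1) * Q + 1 with hLdef
  have hLpos : 0 < L := Nat.succ_pos _
  set δ := η ^ L with hδdef
  have hδpos : 0 < δ := pow_pos hη0 L
  have key : ∀ a (j i : Fin m), δ ≤ Pr W a L i j := fun a j i =>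
    Pr_entries_pos hm Ed W hself hW0 hWsupp η hη0 hWη Q hconn a j i
  have hm' : (0:ℝ) < m := by exact_mod_cast hm
  have hmδ : (m:ℝ) * δ ≤ 1 := by
    have h1 : ∑ p, Pr W 0 L (⟨0, hm⟩ : Fin m) p = 1 := Pr_row W hrow 0 L _
    have h2 : ∑ p : Fin m, δ ≤ ∑ p, Pr W 0 L (⟨0, hm⟩ : Fin m) p :=
      Finset.sum_le_sum fun p _ => key 0 p _
    rw [Finset.sum_const, Finset.card_univ, Fintype.card_fin, nsmul_eq_mul] at h2
    linarith
  set ρ := 1 - (m:ℝ) * δ with hρdef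
  have hρ0 : 0 ≤ ρ := by rw [hρdef]; linarith
  have hρ1 : ρ < 1 := by
    have : 0 < (m:ℝ) * δ := mul_pos hm' hδpos
    rw [hρdef]; linarith
  -- per-column oscillation bound
  have hbound : ∀ (i j : Fin m) (n : ℕ), |Pr W s n i j - (m:ℝ)⁻¹| ≤ ρ ^ (n / L) := by
    intro i j
    set d : ℕ → ℝ := fun n =>
      Finset.univ.sup' hne (fun p => Pr W s n p j) -
        Finset.univ.inf' hne (fun p => Pr W s n p j) with hddef
    have dstep : ∀ n, d (n + 1) ≤ d n := by
      intro n
      have hx : (fun p => Pr W s (n + 1) p j) =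
          (fun i => ∑ p, W (s + n) i p * Pr W s n p j) := by
        funext i
        show (W (s + n) * Pr W s n) i j = _
        rw [Matrix.mul_apply]
      have h := contraction_aux hne (W (s + n)) (fun p => Pr W s n p j) 0
        (fun i p => hW0 _ _ _) (hrow (s + n))
      rw [hddef]
      simp only [hx]
      calc Finset.univ.sup' hne (fun i => ∑ p, W (s + n) i p * Pr W s n p j) -
            Finset.univ.inf' hne (fun i => ∑ p, W (s + n) i p * Pr W s n p j)
          ≤ (1 - (m:ℝ) * 0) * (Finset.univ.sup' hne (fun p => Pr W s n p j) -
              Finset.univ.inf' hne (fun p => Pr W s n p j)) := h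
        _ = d n := by rw [hddef]; ring
    have dmono : ∀ n k, d (n + k) ≤ d n := by
      intro n k
      induction k with
      | zero => exact le_refl _
      | succ k ih => exact le_trans (dstep (n + k)) ih
    have dblock : ∀ n, d (L + n) ≤ ρ * d n := by
      intro n
      have hx : (fun p => Pr W s (L + n) p j) =
          (fun i => ∑ p, Pr W (s + n) L i p * Pr W s n p j) := by
        funext i
        show Pr W s (L + n) i j = _
        rw [Pr_add W s L n, Matrix.mul_apply]
      have h := contraction_aux hne (Pr W (s + n) L) (fun p => Pr W s n p j) δ
        (fun i p => key (s + n) p i) (Pr_row W hrow (s + n) L)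
      rw [hddef]
      simp only [hx]
      calc Finset.univ.sup' hne (fun i => ∑ p, Pr W (s + n) L i p * Pr W s n p j) -
            Finset.univ.inf' hne (fun i => ∑ p, Pr W (s + n) L i p * Pr W s n p j)
          ≤ (1 - (m:ℝ) * δ) * (Finset.univ.sup' hne (fun p => Pr W s n p j) -
              Finset.univ.inf' hne (fun p => Pr W s n p j)) := h
        _ = ρ * d n := by rw [hρdef, hddef]
    have d0le : d 0 ≤ 1 := by
      show Finset.univ.sup' hne (fun p => Pr W s 0 p j) -
        Finset.univ.inf' hne (fun p => Pr W s 0 p j) ≤ 1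
      have h1 : Finset.univ.sup' hne (fun p => Pr W s 0 p j) ≤ 1 := by
        apply Finset.sup'_le
        intro p _
        show (1 : Matrix (Fin m) (Fin m) ℝ) p j ≤ 1
        by_cases h : p = j <;> simp [Matrix.one_apply, h]
      have h2 : (0:ℝ) ≤ Finset.univ.inf' hne (fun p => Pr W s 0 p j) := by
        apply Finset.le_inf'
        intro p _
        exact Pr_nonneg W hW0 s 0 p j
      linarith
    have dgeo : ∀ k, d (L * k) ≤ ρ ^ k := by
      intro k
      induction k with
      | zero => simpa using d0le
      | succ k ih =>
          have he : L * (k + 1) = L + L * k := by ring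
          rw [he]
          calc d (L + L * k) ≤ ρ * d (L * k) := dblock (L * k)
            _ ≤ ρ * ρ ^ k := mul_le_mul_of_nonneg_left ih hρ0
            _ = ρ ^ (k + 1) := by ring
    have dle : ∀ n, d n ≤ ρ ^ (n / L) := by
      intro n
      have h1 : d n ≤ d (L * (n / L)) := by
        have h := dmono (L * (n / L)) (n % L)
        have he : L * (n / L) + n % L = n := Nat.div_add_mod n L
        rwa [he] at h
      exact le_trans h1 (dgeo (n / L))
    intro n
    have hsum : ∑ p, Pr W s n p j = 1 := Pr_col W hcol s n j
    have hinf : Finset.univ.inf' hne (fun p => Pr W s n p j) ≤ (m:ℝ)⁻¹ := by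
      have h1 : (m:ℝ) * Finset.univ.inf' hne (fun p => Pr W s n p j) ≤ 1 := by
        have h2 := Finset.card_nsmul_le_sum Finset.univ (fun p => Pr W s n p j)
          (Finset.univ.inf' hne (fun p => Pr W s n p j))
          (fun p _ => Finset.inf'_le _ (Finset.mem_univ p))
        rw [Finset.card_univ, Fintype.card_fin, nsmul_eq_mul, hsum] at h2
        exact h2
      rw [inv_eq_one_div, le_div_iff₀ hm']
      linarith
    have hsup : (m:ℝ)⁻¹ ≤ Finset.univ.sup' hne (fun p => Pr W s n p j) := by
      have h1 : 1 ≤ (m:ℝ) * Finset.univ.sup' hne (fun p => Pr W s n p j) := by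
        have h2 := Finset.sum_le_card_nsmul Finset.univ (fun p => Pr W s n p j)
          (Finset.univ.sup' hne (fun p => Pr W s n p j))
          (fun p _ => Finset.le_sup' (fun p => Pr W s n p j) (Finset.mem_univ p))
        rw [Finset.card_univ, Fintype.card_fin, nsmul_eq_mul, hsum] at h2
        exact h2
      rw [inv_eq_one_div, div_le_iff₀ hm']
      linarith
    have hi1 : Pr W s n i j ≤ Finset.univ.sup' hne (fun p => Pr W s n p j) :=
      Finset.le_sup' (fun p => Pr W s n p j) (Finset.mem_univ i)
    have hi2 : Finset.univ.inf' hne (fun p => Pr W s n p j) ≤ Pr W s n i j :=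
      Finset.inf'_le _ (Finset.mem_univ i)
    have hdn : Finset.univ.sup' hne (fun p => Pr W s n p j) -
        Finset.univ.inf' hne (fun p => Pr W s n p j) ≤ ρ ^ (n / L) := dle n
    rw [abs_le]
    constructor <;> linarith
  -- conclude
  have htend0 : Tendsto (fun n : ℕ => ρ ^ ((n + 1) / L)) atTop (nhds 0) := by
    apply (tendsto_pow_atTop_nhds_zero_of_lt_one hρ0 hρ1).comp
    apply tendsto_atTop_atTop.mpr
    intro b
    refine ⟨b * L, fun n hn => ?_⟩
    rw [Nat.le_div_iff_mul_le hLpos]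
    omega
  have hentry : ∀ i j : Fin m,
      Tendsto (fun n => Phi W s n i j) atTop (nhds ((m:ℝ)⁻¹)) := by
    intro i j
    have hb : ∀ n, ‖Phi W s n i j - (m:ℝ)⁻¹‖ ≤ ρ ^ ((n + 1) / L) := by
      intro n
      rw [Phi_eq_Pr W s n, Real.norm_eq_abs]
      exact hbound i j (n + 1)
    have h0 := squeeze_zero_norm hb htend0
    have := h0.add (tendsto_const_nhds (x := (m:ℝ)⁻¹))
    simpa using this
  exact tendsto_pi_nhds.mpr fun i => tendsto_pi_nhds.mpr fun j => hentry i j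
end

section
/- Let Assumptions on the network and weights hold (network connectivity with window Q and doubly stochastic weight matrices with entries bounded below by η on edges). Then for all k ≥ s ≥ 0 and all i, j ∈ V, the matrix products Φ(k,s) = W(k)W(k−1)⋯W(s) satisfy |[Φ(k,s)]_{ij} − 1/m| ≤ θ β^{k−s}, where θ = (1 − η/(4m²))^{−2} and β = (1 − η/(4m²))^{1/Q}. -/
lemma Relation.ReflTransGen.exists_mem_notMem {α : Type*} {r : α → α → Prop} {S : Set α}
    {a b : α} (h : Relation.ReflTransGen r a b) (ha : a ∈ S) (hb : b ∉ S) :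
    ∃ x y, r x y ∧ x ∈ S ∧ y ∉ S := by
  induction h with
  | refl => exact absurd ha hb
  | @tail y z _ hyz ih =>
    by_cases hy : y ∈ S
    · exact ⟨y, z, hyz, hy, hb⟩
    · exact ih hy

open Finset Matrix

namespace Consensus

variable {ι : Type*} [Fintype ι]

section Trajectory

def trajectory (W : ℕ → Matrix ι ι ℝ) (k : ℕ) (v : ι → ℝ) : ℕ → ι → ℝ
  | 0 => v
  | t + 1 => W (k + t) *ᵥ trajectory W k v t

variable {W : ℕ → Matrix ι ι ℝ}

lemma trajectory_add (k : ℕ) (v : ι → ℝ) (a b : ℕ) :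
    trajectory W k v (a + b) = trajectory W (k + a) (trajectory W k v a) b := by
  induction b with
  | zero => rfl
  | succ b ih => rw [← add_assoc, trajectory, ih, trajectory, add_assoc]

variable [DecidableEq ι]

lemma trajectory_sub_smul_one (hW : ∀ k, W k ∈ rowStochastic ℝ ι) (k : ℕ) (v : ι → ℝ) (c : ℝ)
    (t : ℕ) : trajectory W k (v - c • 1) t = trajectory W k v t - c • 1 := by
  induction t with
  | zero => rfl
  | succ t ih =>
    rw [trajectory, ih, mulVec_sub, mulVec_smul, one_vecMul_of_mem_rowStochastic (hW _)]
    rfl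

lemma sum_trajectory (hW : ∀ k, W k ∈ colStochastic ℝ ι) (k : ℕ) (v : ι → ℝ) (t : ℕ) :
    ∑ i, trajectory W k v t i = ∑ i, v i := by
  induction t with
  | zero => rfl
  | succ t ih => rw [trajectory, sum_mulVec_of_mem_colStochastic (hW _), ih]

end Trajectory

section RowVariance

def rowVar (w : Matrix ι ι ℝ) (v : ι → ℝ) (i : ι) : ℝ := ∑ j, w i j * (v j - (w *ᵥ v) i) ^ 2

variable {w : Matrix ι ι ℝ} {v : ι → ℝ}

lemma rowVar_nonneg {i : ι} (hw : ∀ j, 0 ≤ w i j) : 0 ≤ rowVar w v i :=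
  sum_nonneg fun j _ => mul_nonneg (hw j) (sq_nonneg _)

lemma sum_sq_sub_sum_sq_mulVec [DecidableEq ι] (hw : w ∈ doublyStochastic ℝ ι) :
    ∑ j, v j ^ 2 - ∑ i, (w *ᵥ v) i ^ 2 = ∑ i, rowVar w v i := by
  have hrowVar : ∀ i, rowVar w v i = ∑ j, w i j * v j ^ 2 - (w *ᵥ v) i ^ 2 := by
    intro i
    set μ := (w *ᵥ v) i
    have hexpand : ∀ j, w i j * (v j - μ) ^ 2 =
        w i j * v j ^ 2 - 2 * μ * (w i j * v j) + μ ^ 2 * w i j := fun j => by ring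
    have hmean : ∑ j, w i j * v j = μ := rfl
    rw [rowVar, sum_congr rfl fun j _ => hexpand j, sum_add_distrib, sum_sub_distrib, ← mul_sum,
      ← mul_sum, hmean, sum_row_of_mem_doublyStochastic hw]
    ring
  rw [sum_congr rfl fun i _ => hrowVar i, sum_sub_distrib, sum_comm]
  simp only [← sum_mul, sum_col_of_mem_doublyStochastic hw, one_mul]

lemma sq_sub_le_rowVar {η : ℝ} (hη : 0 ≤ η) {i a b : ι} (hw : ∀ j, 0 ≤ w i j) (ha : η ≤ w i a)
    (hb : η ≤ w i b) : η / 2 * (v a - v b) ^ 2 ≤ rowVar w v i := by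
  classical
  rcases eq_or_ne a b with rfl | hab
  · simpa using rowVar_nonneg hw
  set μ := (w *ᵥ v) i
  have hpair : w i a * (v a - μ) ^ 2 + w i b * (v b - μ) ^ 2 ≤ rowVar w v i := by
    have := sum_le_sum_of_subset_of_nonneg (subset_univ {a, b})
      fun j _ _ => mul_nonneg (hw j) (sq_nonneg (v j - μ))
    rwa [sum_pair hab] at this
  nlinarith [mul_le_mul_of_nonneg_right ha (sq_nonneg (v a - μ)),
    mul_le_mul_of_nonneg_right hb (sq_nonneg (v b - μ)), sq_nonneg (v a + v b - 2 * μ)]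

end RowVariance

section Energy

variable [DecidableEq ι] {W : ℕ → Matrix ι ι ℝ} (hW : ∀ k, W k ∈ doublyStochastic ℝ ι)
include hW

lemma sum_sq_sub_sum_sq_trajectory (k : ℕ) (v : ι → ℝ) (t : ℕ) :
    ∑ i, v i ^ 2 - ∑ i, trajectory W k v t i ^ 2 =
      ∑ t' ∈ range t, ∑ i, rowVar (W (k + t')) (trajectory W k v t') i := by
  induction t with
  | zero => simp [trajectory]
  | succ t ih =>
    rw [sum_range_succ, ← ih, ← sum_sq_sub_sum_sq_mulVec (hW _), trajectory]
    ring

lemma antitone_sum_sq_trajectory (k : ℕ) (v : ι → ℝ) :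
    Antitone fun t => ∑ i, trajectory W k v t i ^ 2 := by
  refine antitone_nat_of_succ_le fun t => ?_
  have hdrop := sum_sq_sub_sum_sq_mulVec (v := trajectory W k v t) (hW (k + t))
  have hnonneg : 0 ≤ ∑ i, rowVar (W (k + t)) (trajectory W k v t) i :=
    sum_nonneg fun i _ => rowVar_nonneg fun j => nonneg_of_mem_doublyStochastic (hW _)
  simp only [trajectory]
  linarith

lemma sum_sq_trajectory_le_pow {ρ : ℝ} (hρ : 0 ≤ ρ) {Q : ℕ}
    (hwin : ∀ k (v : ι → ℝ), ∑ i, v i = 0 →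
      ∑ i, trajectory W k v Q i ^ 2 ≤ ρ * ∑ i, v i ^ 2)
    (k : ℕ) {v : ι → ℝ} (hv : ∑ i, v i = 0) (t : ℕ) :
    ∑ i, trajectory W k v t i ^ 2 ≤ ρ ^ (t / Q) * ∑ i, v i ^ 2 := by
  have hcol : ∀ k, W k ∈ colStochastic ℝ ι := fun k =>
    (mem_doublyStochastic_iff_mem_rowStochastic_and_mem_colStochastic.1 (hW k)).2
  have hwindows : ∀ q, ∑ i, trajectory W k v (Q * q) i ^ 2 ≤ ρ ^ q * ∑ i, v i ^ 2 := by
    intro q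
    induction q with
    | zero => simp [trajectory]
    | succ q ih =>
      rw [Nat.mul_succ, trajectory_add, pow_succ', mul_assoc]
      refine (hwin _ _ ?_).trans (mul_le_mul_of_nonneg_left ih hρ)
      rw [sum_trajectory hcol, hv]
  exact (antitone_sum_sq_trajectory hW k v (Nat.mul_div_le t Q)).trans (hwindows _)

end Energy

section Crossing

variable [DecidableEq ι]

lemma le_mulVec_apply {w : Matrix ι ι ℝ} (hw : w ∈ rowStochastic ℝ ι) {x : ι → ℝ} {i : ι} {a : ℝ}
    (hx : ∀ j, w i j ≠ 0 → a ≤ x j) : a ≤ (w *ᵥ x) i := calc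
  a = ∑ j, w i j * a := by rw [← sum_mul, sum_row_of_mem_rowStochastic hw, one_mul]
  _ ≤ ∑ j, w i j * x j := sum_le_sum fun j _ => by
    rcases eq_or_ne (w i j) 0 with h | h
    · simp [h]
    · exact mul_le_mul_of_nonneg_left (hx j h) (nonneg_of_mem_rowStochastic hw)

lemma mulVec_apply_le {w : Matrix ι ι ℝ} (hw : w ∈ rowStochastic ℝ ι) {x : ι → ℝ} {i : ι} {b : ℝ}
    (hx : ∀ j, w i j ≠ 0 → x j ≤ b) : (w *ᵥ x) i ≤ b := by
  have := le_mulVec_apply (x := -x) hw (a := -b) fun j hj => neg_le_neg (hx j hj)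
  rwa [mulVec_neg, Pi.neg_apply, neg_le_neg_iff] at this

variable {W : ℕ → Matrix ι ι ℝ} {Ed : ℕ → ι → ι → Prop}
  (hW : ∀ k, W k ∈ rowStochastic ℝ ι) (hsupp : ∀ k i j, ¬ Ed k i j → W k i j = 0)
include hW hsupp

lemma trajectory_bounds_of_no_crossing {k t : ℕ} {v : ι → ℝ} {S : Set ι} {a b : ℝ}
    (hS : ∀ t' < t, ∀ i j, Ed (k + t') i j → (i ∈ S ↔ j ∈ S))
    (ha : ∀ i ∈ S, a ≤ v i) (hb : ∀ i ∉ S, v i ≤ b) :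
    (∀ i ∈ S, a ≤ trajectory W k v t i) ∧ ∀ i ∉ S, trajectory W k v t i ≤ b := by
  induction t with
  | zero => exact ⟨ha, hb⟩
  | succ t ih =>
    obtain ⟨iha, ihb⟩ := ih fun t' ht' => hS t' (ht'.trans (Nat.lt_succ_self t))
    have hedge : ∀ i j, W (k + t) i j ≠ 0 → (i ∈ S ↔ j ∈ S) := fun i j hij =>
      hS t (Nat.lt_succ_self t) i j (not_imp_comm.1 (hsupp _ i j) hij)
    exact ⟨fun i hi => le_mulVec_apply (hW _) fun j hj => iha j ((hedge i j hj).1 hi),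
      fun i hi => mulVec_apply_le (hW _) fun j hj => ihb j (mt (hedge i j hj).2 hi)⟩

/-- Take the first time an edge crosses the cut `S`: until then the values on `S` stay `≥ a`
and the others `≤ b`. -/
lemma exists_straddling_edge {k Q : ℕ} {v : ι → ℝ} {S : Set ι} {a b : ℝ} {p q : ι}
    (hpath : Relation.ReflTransGen (fun i j => ∃ ℓ < Q, Ed (k + ℓ) i j) p q) (hp : p ∈ S)
    (hq : q ∉ S) (ha : ∀ i ∈ S, a ≤ v i) (hb : ∀ i ∉ S, v i ≤ b) :
    ∃ t < Q, ∃ i j, Ed (k + t) i j ∧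
      (trajectory W k v t i ≤ b ∨ trajectory W k v t j ≤ b) ∧
      (a ≤ trajectory W k v t i ∨ a ≤ trajectory W k v t j) := by
  classical
  obtain ⟨x, y, ⟨ℓ, hℓ, hxy⟩, hx, hy⟩ := hpath.exists_mem_notMem hp hq
  have hcross : ∃ t, ∃ i j, Ed (k + t) i j ∧ ¬(i ∈ S ↔ j ∈ S) :=
    ⟨ℓ, x, y, hxy, fun h => hy (h.1 hx)⟩
  obtain ⟨i, j, hij, hij_cross⟩ := Nat.find_spec hcross
  obtain ⟨hbound_a, hbound_b⟩ := trajectory_bounds_of_no_crossing hW hsupp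
    (fun t' ht' i j hij' => not_not.1 fun h => Nat.find_min hcross ht' ⟨i, j, hij', h⟩) ha hb
  refine ⟨_, (Nat.find_min' hcross ⟨x, y, hxy, fun h => hy (h.1 hx)⟩).trans_lt hℓ, i, j, hij, ?_⟩
  by_cases hi : i ∈ S
  · have hj : j ∉ S := fun hj => hij_cross (iff_of_true hi hj)
    exact ⟨Or.inr (hbound_b j hj), Or.inl (hbound_a i hi)⟩
  · have hj : j ∈ S := not_not.1 fun hj => hij_cross (iff_of_false hi hj)
    exact ⟨Or.inl (hbound_b i hi), Or.inr (hbound_a j hj)⟩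

end Crossing

section Gaps

lemma sum_sq_sub_le_sq_of_monotone {z : ℕ → ℝ} (hz : Monotone z) {a b : ℝ} (hab : a ≤ b)
    (L : Finset ℕ) (hL : ∀ ℓ ∈ L, a ≤ z ℓ ∧ z (ℓ + 1) ≤ b) :
    ∑ ℓ ∈ L, (z (ℓ + 1) - z ℓ) ^ 2 ≤ (b - a) ^ 2 := by
  induction L using Finset.induction_on_max generalizing b with
  | empty => simpa using sq_nonneg (b - a)
  | insert ℓ L hlt ih =>
    obtain ⟨haℓ, hℓb⟩ := hL ℓ (mem_insert_self ℓ L)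
    have hL' : ∀ ℓ' ∈ L, a ≤ z ℓ' ∧ z (ℓ' + 1) ≤ z ℓ := fun ℓ' hℓ' =>
      ⟨(hL ℓ' (mem_insert_of_mem hℓ')).1, hz (hlt ℓ' hℓ')⟩
    have hgap : z ℓ ≤ z (ℓ + 1) := hz (Nat.le_succ ℓ)
    rw [sum_insert fun h => lt_irrefl ℓ (hlt ℓ h)]
    nlinarith [ih haℓ hL']

lemma sq_sub_le_mul_sum_sq_sub (z : ℕ → ℝ) (r : ℕ) :
    (z r - z 0) ^ 2 ≤ r * ∑ ℓ ∈ range r, (z (ℓ + 1) - z ℓ) ^ 2 := by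
  have := sq_sum_le_card_mul_sum_sq (s := range r) (f := fun ℓ => z (ℓ + 1) - z ℓ)
  rwa [sum_range_sub, card_range] at this

lemma four_mul_sum_sq_le_of_sum_eq_zero {v : ι → ℝ} (hv : ∑ i, v i = 0) {a b : ℝ}
    (ha : ∀ i, a ≤ v i) (hb : ∀ i, v i ≤ b) :
    4 * ∑ i, v i ^ 2 ≤ Fintype.card ι * (b - a) ^ 2 := by
  have hpoint : ∀ i, v i ^ 2 ≤ (a + b) * v i - a * b := fun i => by nlinarith [ha i, hb i]
  have hsum : ∑ i, v i ^ 2 ≤ -(Fintype.card ι * (a * b)) := by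
    calc ∑ i, v i ^ 2 ≤ ∑ i, ((a + b) * v i - a * b) := sum_le_sum fun i _ => hpoint i
      _ = -(Fintype.card ι * (a * b)) := by
        rw [sum_sub_distrib, ← mul_sum, hv, sum_const, card_univ, nsmul_eq_mul]; ring
  nlinarith [mul_nonneg (Nat.cast_nonneg (α := ℝ) (Fintype.card ι)) (sq_nonneg (a + b))]

/-- The gaps `[z ℓ, z (ℓ + 1)]`, `ℓ ∈ L`, are disjoint and lie in the range of `v` on `N`, which
`sq_sub_le_rowVar` controls. -/
lemma sum_sq_gap_le_rowVar {w : Matrix ι ι ℝ} {v : ι → ℝ} {i : ι} (hw : ∀ j, 0 ≤ w i j) {η : ℝ}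
    (hη : 0 ≤ η) {N : Finset ι} (hN : ∀ p ∈ N, η ≤ w i p) {z : ℕ → ℝ} (hz : Monotone z)
    {L : Finset ℕ} (hL : ∀ ℓ ∈ L, (∃ p ∈ N, v p ≤ z ℓ) ∧ ∃ q ∈ N, z (ℓ + 1) ≤ v q) :
    η / 2 * ∑ ℓ ∈ L, (z (ℓ + 1) - z ℓ) ^ 2 ≤ rowVar w v i := by
  rcases L.eq_empty_or_nonempty with rfl | ⟨ℓ₀, hℓ₀⟩
  · simpa using rowVar_nonneg hw
  obtain ⟨p₀, hp₀, -⟩ := (hL ℓ₀ hℓ₀).1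
  obtain ⟨lo, hlo, hlo_min⟩ := N.exists_min_image v ⟨p₀, hp₀⟩
  obtain ⟨hi, hhi, hhi_max⟩ := N.exists_max_image v ⟨p₀, hp₀⟩
  have hgaps : ∑ ℓ ∈ L, (z (ℓ + 1) - z ℓ) ^ 2 ≤ (v hi - v lo) ^ 2 := by
    refine sum_sq_sub_le_sq_of_monotone hz (hlo_min hi hhi) L fun ℓ hℓ => ?_
    obtain ⟨⟨p, hp, hpz⟩, ⟨q, hq, hqz⟩⟩ := hL ℓ hℓ
    exact ⟨(hlo_min p hp).trans hpz, hqz.trans (hhi_max q hq)⟩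
  calc η / 2 * ∑ ℓ ∈ L, (z (ℓ + 1) - z ℓ) ^ 2 ≤ η / 2 * (v hi - v lo) ^ 2 := by gcongr
    _ ≤ rowVar w v i := sq_sub_le_rowVar hη hw (hN hi hhi) (hN lo hlo)

end Gaps

/-- Each gap `[z ℓ, z (ℓ + 1)]` is charged to the row variance at the first crossing of the cut
`{i | ℓ < rank i}`, where some edge straddles it. -/
lemma sum_sq_gap_le_sum_sq_sub_sum_sq_trajectory [DecidableEq ι] {W : ℕ → Matrix ι ι ℝ}
    {Ed : ℕ → ι → ι → Prop} {η : ℝ} {Q k : ℕ} (hW : ∀ k, W k ∈ doublyStochastic ℝ ι)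
    (hsupp : ∀ k i j, ¬ Ed k i j → W k i j = 0) (hself : ∀ k i, Ed k i i) (hη : 0 ≤ η)
    (hWη : ∀ k i j, Ed k i j → η ≤ W k i j)
    (hconn : ∀ i j, Relation.ReflTransGen (fun u w => ∃ ℓ < Q, Ed (k + ℓ) u w) i j)
    {v : ι → ℝ} {z : ℕ → ℝ} (hz : Monotone z) {rank : ι → ℕ} (hv : ∀ i, v i = z (rank i))
    {r : ℕ} (hbot : ∃ i, rank i = 0) (htop : ∃ i, rank i = r) :
    η / 2 * ∑ ℓ ∈ range r, (z (ℓ + 1) - z ℓ) ^ 2 ≤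
      ∑ i, v i ^ 2 - ∑ i, trajectory W k v Q i ^ 2 := by
  set x := trajectory W k v
  obtain ⟨p, hp⟩ := htop
  obtain ⟨q, hq⟩ := hbot
  have : Nonempty ι := ⟨p⟩
  have hrow : ∀ k, W k ∈ rowStochastic ℝ ι := fun k =>
    (mem_doublyStochastic_iff_mem_rowStochastic_and_mem_colStochastic.1 (hW k)).1
  have hcut : ∀ ℓ ∈ range r, ∃ t < Q, ∃ i j, Ed (k + t) i j ∧
      (x t i ≤ z ℓ ∨ x t j ≤ z ℓ) ∧ (z (ℓ + 1) ≤ x t i ∨ z (ℓ + 1) ≤ x t j) := fun ℓ hℓ =>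
    exists_straddling_edge hrow hsupp (S := {i | ℓ < rank i}) (hconn p q)
      (by simpa [hp] using hℓ) (by simp [hq]) (fun i hi => hv i ▸ hz (Nat.succ_le_of_lt hi))
      (fun i hi => hv i ▸ hz (not_lt.1 hi))
  choose! T hTQ I J hEd hlow hhigh using hcut
  have hfiber : ∀ t < Q, ∀ i, η / 2 * ∑ ℓ ∈ range r with (T ℓ, I ℓ) = (t, i),
      (z (ℓ + 1) - z ℓ) ^ 2 ≤ rowVar (W (k + t)) (x t) i := by
    intro t _ i
    set L := (range r).filter fun ℓ => (T ℓ, I ℓ) = (t, i)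
    have hmemL : ∀ ℓ ∈ L, ℓ ∈ range r ∧ T ℓ = t ∧ I ℓ = i := fun ℓ hℓ => by
      simp only [L, mem_filter, Prod.mk.injEq] at hℓ
      exact ⟨hℓ.1, hℓ.2⟩
    refine sum_sq_gap_le_rowVar (N := insert i (L.image J))
      (fun j => nonneg_of_mem_doublyStochastic (hW _)) hη ?_ hz fun ℓ hℓ => ?_
    · simp only [mem_insert, mem_image]
      rintro p (rfl | ⟨ℓ, hℓ, rfl⟩)
      · exact hWη _ _ _ (hself _ _)
      · obtain ⟨hℓr, rfl, rfl⟩ := hmemL ℓ hℓ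
        exact hWη _ _ _ (hEd ℓ hℓr)
    · obtain ⟨hℓr, rfl, rfl⟩ := hmemL ℓ hℓ
      have hJ : J ℓ ∈ insert (I ℓ) (L.image J) := mem_insert_of_mem (mem_image_of_mem J hℓ)
      refine ⟨?_, ?_⟩
      · rcases hlow ℓ hℓr with h | h
        exacts [⟨_, mem_insert_self _ _, h⟩, ⟨_, hJ, h⟩]
      · rcases hhigh ℓ hℓr with h | h
        exacts [⟨_, mem_insert_self _ _, h⟩, ⟨_, hJ, h⟩]
  have hmaps : ∀ ℓ ∈ range r, (T ℓ, I ℓ) ∈ range Q ×ˢ (univ : Finset ι) :=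
    fun ℓ hℓ => mem_product.2 ⟨mem_range.2 (hTQ ℓ hℓ), mem_univ _⟩
  calc η / 2 * ∑ ℓ ∈ range r, (z (ℓ + 1) - z ℓ) ^ 2
      = ∑ p ∈ range Q ×ˢ univ,
          η / 2 * ∑ ℓ ∈ range r with (T ℓ, I ℓ) = p, (z (ℓ + 1) - z ℓ) ^ 2 := by
        rw [← mul_sum, sum_fiberwise_of_maps_to hmaps]
    _ ≤ ∑ p ∈ range Q ×ˢ univ, rowVar (W (k + p.1)) (x p.1) p.2 :=
        sum_le_sum fun p hp => hfiber p.1 (mem_range.1 (mem_product.1 hp).1) p.2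
    _ = ∑ i, v i ^ 2 - ∑ i, x Q i ^ 2 := by
        rw [sum_product, sum_sq_sub_sum_sq_trajectory hW]

lemma exists_monotone_comp_rank {α : Type*} [LinearOrder α] {m : ℕ} (hm : 0 < m)
    (v : Fin m → α) :
    ∃ (z : ℕ → α) (rank : Fin m → ℕ), Monotone z ∧ (∀ i, v i = z (rank i)) ∧
      (∀ i, rank i ≤ m - 1) ∧ (∃ i, rank i = 0) ∧ ∃ i, rank i = m - 1 := by
  set σ := Tuple.sort v
  refine ⟨fun ℓ => v (σ ⟨min ℓ (m - 1), by omega⟩), fun i => σ.symm i, fun a b hab => ?_,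
    fun i => ?_, fun i => ?_, ⟨σ ⟨0, hm⟩, by simp⟩, ⟨σ ⟨m - 1, by omega⟩, by simp⟩⟩
  · exact Tuple.monotone_sort v (Fin.mk_le_mk.2 (min_le_min_right _ hab))
  · have hi : (⟨min (σ.symm i : ℕ) (m - 1), by omega⟩ : Fin m) = σ.symm i :=
      Fin.ext (min_eq_left (by omega))
    simp [hi]
  · show (σ.symm i : ℕ) ≤ m - 1
    have := (σ.symm i).isLt
    omega

theorem sum_sq_trajectory_window_le {m : ℕ} (hm : 0 < m)
    {W : ℕ → Matrix (Fin m) (Fin m) ℝ} {Ed : ℕ → Fin m → Fin m → Prop} {η : ℝ} {Q : ℕ}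
    (hW : ∀ k, W k ∈ doublyStochastic ℝ (Fin m)) (hsupp : ∀ k i j, ¬ Ed k i j → W k i j = 0)
    (hself : ∀ k i, Ed k i i) (hη : 0 ≤ η) (hWη : ∀ k i j, Ed k i j → η ≤ W k i j) {k : ℕ}
    (hconn : ∀ i j, Relation.ReflTransGen (fun u w => ∃ ℓ < Q, Ed (k + ℓ) u w) i j)
    {v : Fin m → ℝ} (hv : ∑ i, v i = 0) :
    ∑ i, trajectory W k v Q i ^ 2 ≤ (1 - 2 * η / m ^ 2) * ∑ i, v i ^ 2 := by
  obtain ⟨z, rank, hz, hvz, hrank, hbot, htop⟩ := exists_monotone_comp_rank hm v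
  have hdrop := sum_sq_gap_le_sum_sq_sub_sum_sq_trajectory hW hsupp hself hη hWη hconn hz hvz
    hbot htop
  have hspread := four_mul_sum_sq_le_of_sum_eq_zero hv (a := z 0) (b := z (m - 1))
    (fun i => hvz i ▸ hz (Nat.zero_le _)) (fun i => hvz i ▸ hz (hrank i))
  have hcs := sq_sub_le_mul_sum_sq_sub z (m - 1)
  rw [Fintype.card_fin] at hspread
  set G := ∑ ℓ ∈ range (m - 1), (z (ℓ + 1) - z ℓ) ^ 2
  have hG : 0 ≤ G := sum_nonneg fun _ _ => sq_nonneg _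
  have hm1 : ((m - 1 : ℕ) : ℝ) ≤ m := Nat.cast_le.2 (Nat.sub_le m 1)
  have h4 : 4 * ∑ i, v i ^ 2 ≤ (m : ℝ) ^ 2 * G := by
    nlinarith [mul_le_mul_of_nonneg_left hcs (Nat.cast_nonneg (α := ℝ) m),
      mul_le_mul_of_nonneg_right hm1 hG]
  have hrate : 2 * η / m ^ 2 * ∑ i, v i ^ 2 ≤ η / 2 * G := by
    rw [div_mul_eq_mul_div, div_le_iff₀ (by positivity)]
    nlinarith [mul_le_mul_of_nonneg_left h4 hη]
  rw [sub_mul, one_mul]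
  linarith

lemma Phi_mulVec {m : ℕ} (W : ℕ → Matrix (Fin m) (Fin m) ℝ) (s n : ℕ) (u : Fin m → ℝ) :
    Phi W s n *ᵥ u = trajectory W s u (n + 1) := by
  induction n with
  | zero => rfl
  | succ n ih => rw [Phi, ← mulVec_mulVec, ih]; rfl

lemma Phi_apply_sub_inv {m : ℕ} {W : ℕ → Matrix (Fin m) (Fin m) ℝ}
    (hW : ∀ k, W k ∈ rowStochastic ℝ (Fin m)) (s n : ℕ) (i j : Fin m) :
    Phi W s n i j - (m : ℝ)⁻¹ = trajectory W s (Pi.single j 1 - (m : ℝ)⁻¹ • 1) (n + 1) i := by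
  rw [trajectory_sub_smul_one hW, ← Phi_mulVec, mulVec_single_one]
  simp

lemma sum_single_sub_inv_smul_one {m : ℕ} (j : Fin m) :
    ∑ l, (Pi.single j 1 - (m : ℝ)⁻¹ • 1 : Fin m → ℝ) l = 0 := by
  have hm : (m : ℝ) ≠ 0 := Nat.cast_ne_zero.2 j.pos.ne'
  simp [sum_sub_distrib, hm]

lemma sum_sq_single_sub_inv_smul_one_le {m : ℕ} (j : Fin m) :
    ∑ l, (Pi.single j 1 - (m : ℝ)⁻¹ • 1 : Fin m → ℝ) l ^ 2 ≤ 1 := by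
  have hm : (m : ℝ) ≠ 0 := Nat.cast_ne_zero.2 j.pos.ne'
  have hsq : ∑ l, (Pi.single j 1 - (m : ℝ)⁻¹ • 1 : Fin m → ℝ) l ^ 2 = 1 - (m : ℝ)⁻¹ := by
    simp [sub_sq, sum_add_distrib, sum_sub_distrib, Pi.single_apply]
    field_simp
    ring
  rw [hsq]
  linarith [inv_nonneg.2 (Nat.cast_nonneg (α := ℝ) m)]

lemma abs_le_of_sum_sq_le {x : ι → ℝ} {b : ℝ} (h : ∑ i, x i ^ 2 ≤ b ^ 2) (hb : 0 ≤ b) (i : ι) :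
    |x i| ≤ b :=
  abs_le_of_sq_le_sq ((single_le_sum (fun j _ => sq_nonneg (x j)) (mem_univ i)).trans h) hb

lemma one_sub_div_four_mul_sq_bounds {η μ : ℝ} (hη0 : 0 ≤ η) (hη1 : η < 1) (hμ : 1 ≤ μ) :
    0 < 1 - η / (4 * μ ^ 2) ∧ 1 - η / (4 * μ ^ 2) ≤ 1 ∧
      1 - 2 * η / μ ^ 2 ≤ (1 - η / (4 * μ ^ 2)) ^ 2 := by
  have hδ0 : 0 ≤ η / (4 * μ ^ 2) := by positivity
  have hδη : η / (4 * μ ^ 2) ≤ η := div_le_self hη0 (by nlinarith)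
  have h8 : 2 * η / μ ^ 2 = 8 * (η / (4 * μ ^ 2)) := by ring
  refine ⟨by linarith, by linarith, ?_⟩
  rw [h8]
  nlinarith

lemma pow_succ_div_le {c : ℝ} (hc0 : 0 < c) (hc1 : c ≤ 1) {Q : ℕ} (hQ : 0 < Q) (n : ℕ) :
    c ^ ((n + 1) / Q) ≤ (c ^ 2)⁻¹ * (c ^ (Q : ℝ)⁻¹) ^ n := by
  have hlt : (n : ℝ) + 1 < Q * (((n + 1) / Q : ℕ) + 1) := by
    exact_mod_cast Nat.lt_mul_div_succ (n + 1) hQ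
  have hexp : (Q : ℝ)⁻¹ * n - 2 ≤ ((n + 1) / Q : ℕ) := by
    have hQ' : (0 : ℝ) < Q := by exact_mod_cast hQ
    rw [inv_mul_eq_div, sub_le_iff_le_add, div_le_iff₀ hQ']
    nlinarith
  calc c ^ ((n + 1) / Q) = c ^ (((n + 1) / Q : ℕ) : ℝ) := (Real.rpow_natCast c _).symm
    _ ≤ c ^ ((Q : ℝ)⁻¹ * n - 2) := Real.rpow_le_rpow_of_exponent_ge hc0 hc1 hexp
    _ = (c ^ 2)⁻¹ * (c ^ (Q : ℝ)⁻¹) ^ n := by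
      rw [Real.rpow_sub hc0, Real.rpow_mul_natCast hc0.le, Real.rpow_two, div_eq_inv_mul]

end Consensus

open Consensus in
/-- **Geometric convergence rate of the transition matrices** (Lemma 2(b)).
Under network connectivity (window `Q`) and doubly stochastic weights bounded below by
`η` on edges, for all `k ≥ s ≥ 0` (here `k = s + n`) and all `i, j`,
`|[Φ(k,s)]_{ij} − 1/m| ≤ θ β^(k−s)` where `θ = (1 − η/(4m²))⁻²` and
`β = (1 − η/(4m²))^(1/Q)`. -/
theorem Phi_geometric_rate {m : ℕ} (hm : 0 < m)
    (Ed : ℕ → Fin m → Fin m → Prop)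
    (W : ℕ → Matrix (Fin m) (Fin m) ℝ)
    (hself : ∀ k i, Ed k i i)
    (hW0 : ∀ k i j, 0 ≤ W k i j)
    (hWsupp : ∀ k i j, ¬ Ed k i j → W k i j = 0)
    (hrow : ∀ k i, ∑ j, W k i j = 1)
    (hcol : ∀ k j, ∑ i, W k i j = 1)
    (η : ℝ) (hη0 : 0 < η) (hη1 : η < 1)
    (hWη : ∀ k i j, Ed k i j → η ≤ W k i j)
    (Q : ℕ) (hQ : 1 ≤ Q)
    (hconn : ∀ k, ∀ i j : Fin m,
      Relation.ReflTransGen (fun u w => ∃ ℓ < Q, Ed (k + ℓ) u w) i j) :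
    ∀ (s n : ℕ) (i j : Fin m),
      |Phi W s n i j - (m : ℝ)⁻¹| ≤
        ((1 - η / (4 * (m : ℝ) ^ 2)) ^ 2)⁻¹ *
          ((1 - η / (4 * (m : ℝ) ^ 2)) ^ ((Q : ℝ)⁻¹)) ^ n := by
  intro s n i j
  have hW : ∀ k, W k ∈ doublyStochastic ℝ (Fin m) := fun k =>
    mem_doublyStochastic_iff_sum.2 ⟨hW0 k, hrow k, hcol k⟩
  obtain ⟨hc0, hc1, hrate⟩ := one_sub_div_four_mul_sq_bounds hη0.le hη1 (Nat.one_le_cast.2 hm)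
  set c := 1 - η / (4 * (m : ℝ) ^ 2)
  have hwin : ∀ k (u : Fin m → ℝ), ∑ l, u l = 0 →
      ∑ l, trajectory W k u Q l ^ 2 ≤ c ^ 2 * ∑ l, u l ^ 2 := fun k u hu =>
    (sum_sq_trajectory_window_le hm hW hWsupp hself hη0.le hWη (hconn k) hu).trans
      (mul_le_mul_of_nonneg_right hrate (sum_nonneg fun _ _ => sq_nonneg _))
  set v : Fin m → ℝ := Pi.single j 1 - (m : ℝ)⁻¹ • 1
  have hdecay : ∑ l, trajectory W s v (n + 1) l ^ 2 ≤ (c ^ ((n + 1) / Q)) ^ 2 := calc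
    _ ≤ (c ^ 2) ^ ((n + 1) / Q) * ∑ l, v l ^ 2 :=
      sum_sq_trajectory_le_pow hW (sq_nonneg c) hwin s (sum_single_sub_inv_smul_one j) (n + 1)
    _ ≤ (c ^ 2) ^ ((n + 1) / Q) :=
      mul_le_of_le_one_right (by positivity) (sum_sq_single_sub_inv_smul_one_le j)
    _ = (c ^ ((n + 1) / Q)) ^ 2 := by rw [← pow_mul, ← pow_mul, mul_comm]
  calc |Phi W s n i j - (m : ℝ)⁻¹| ≤ c ^ ((n + 1) / Q) := by
        rw [Phi_apply_sub_inv fun k => mem_rowStochastic_iff_sum.2 ⟨hW0 k, hrow k⟩]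
        exact abs_le_of_sum_sq_le hdecay (by positivity) i
    _ ≤ (c ^ 2)⁻¹ * (c ^ (Q : ℝ)⁻¹) ^ n := pow_succ_div_le hc0 hc1 hQ n
end

section
/- (Robbins–Siegmund supermartingale convergence) Let {v_k}, {u_k}, {a_k}, {b_k} be sequences of nonnegative random variables on a probability space such that E[v_{k+1} | F_k] ≤ (1 + a_k) v_k − u_k + b_k for all k ≥ 0 almost surely, where F_k denotes the σ-algebra generated by v_0,…,v_k, u_0,…,u_k, a_0,…,a_k and b_0,…,b_k. Assume ∑_{k=0}^∞ a_k < ∞ and ∑_{k=0}^∞ b_k < ∞ almost surely. Then {v_k} converges almost surely to some nonnegative random variable v, and ∑_{k=0}^∞ u_k < ∞ almost surely. -/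
/-!
With `α k = ∏ j < k, (1 + a j)`, the process
`W k = v k / α k + ∑ j < k, (u j - b j) / α (j + 1)` is a supermartingale: dividing by `α (k + 1)`
exactly absorbs the factor `1 + a k` in the hypothesis. If the partial sums of `a` and `b` are
bounded by a constant `c`, then `W ≥ -c`, so `W` converges a.s.; as `α` increases to a finite
positive limit, this forces `∑ u < ∞` and the convergence of `v`.
The general case reduces to this one: multiplying `u k`, `a k`, `b k` and `v (k + 1)` by the
`ℱ k`-measurable indicator of `∑ j ≤ k, (a j + b j) ≤ n` preserves the hypothesis and bounds the
partial sums by `n`, and on the event `∑ (a + b) ≤ n` the truncated sequences are the original ones.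
-/

open MeasureTheory Filter Finset Topology

section

variable {Ω : Type*} {m0 : MeasurableSpace Ω} {μ : Measure Ω} {ℱ : Filtration ℕ m0}

theorem MeasureTheory.Supermartingale.exists_ae_tendsto_of_const_le [IsFiniteMeasure μ]
    {f : ℕ → Ω → ℝ} (hf : Supermartingale f ℱ μ) {c : ℝ} (hc : ∀ n ω, c ≤ f n ω) :
    ∀ᵐ ω ∂μ, ∃ l, Tendsto (fun n => f n ω) atTop (𝓝 l) := by
  set g : ℕ → Ω → ℝ := fun n ω => f n ω - c
  have hg : Supermartingale g ℱ μ := hf.sub_martingale (martingale_const ℱ μ c)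
  have hg0 : ∀ n ω, 0 ≤ g n ω := fun n ω => sub_nonneg.2 (hc n ω)
  have hbdd : ∀ n, eLpNorm ((-g) n) 1 μ ≤ (∫ ω, g 0 ω ∂μ).toNNReal := by
    intro n
    rw [Pi.neg_apply, eLpNorm_neg, eLpNorm_one_eq_lintegral_enorm]
    simp_rw [Real.enorm_eq_ofReal (hg0 n _)]
    rw [← ofReal_integral_eq_lintegral_ofReal (hg.integrable n) (ae_of_all _ (hg0 n))]
    refine ENNReal.ofReal_le_ofReal ?_
    simpa using hg.setIntegral_le (Nat.zero_le n) MeasurableSet.univ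
  filter_upwards [hg.neg.exists_ae_tendsto_of_bdd hbdd] with ω ⟨l, hl⟩
  exact ⟨-l + c, by simpa [g] using hl.neg.add_const c⟩

end

theorem exists_tendsto_and_summable_of_tendsto_weighted {α v u b : ℕ → ℝ} {M l : ℝ}
    (hα : Monotone α) (hα0 : 0 < α 0) (hαM : ∀ k, α k ≤ M)
    (hv : ∀ k, 0 ≤ v k) (hu : ∀ k, 0 ≤ u k) (hb0 : ∀ k, 0 ≤ b k) (hb : Summable b)
    (hW : Tendsto (fun k => (α k)⁻¹ * v k + ∑ j ∈ range k, (α (j + 1))⁻¹ * (u j - b j))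
      atTop (𝓝 l)) :
    (∃ l, Tendsto v atTop (𝓝 l)) ∧ Summable u := by
  have hαpos : ∀ k, 0 < α k := fun k => hα0.trans_le (hα (Nat.zero_le k))
  obtain ⟨L, hαL⟩ : ∃ L, Tendsto α atTop (𝓝 L) :=
    ⟨_, tendsto_atTop_ciSup hα ⟨M, by rintro _ ⟨k, rfl⟩; exact hαM k⟩⟩
  set β : ℕ → ℝ := fun j => (α (j + 1))⁻¹
  have hβ0 : ∀ j, 0 ≤ β j := fun j => inv_nonneg.2 (hαpos _).le
  have hβb : Summable fun j => β j * b j :=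
    (hb.mul_left (α 0)⁻¹).of_nonneg_of_le (fun j => mul_nonneg (hβ0 j) (hb0 j)) fun j =>
      mul_le_mul_of_nonneg_right (inv_anti₀ hα0 (hα (Nat.zero_le _))) (hb0 j)
  have hsplit : ∀ k, (α k)⁻¹ * v k + ∑ j ∈ range k, (α (j + 1))⁻¹ * (u j - b j) =
      (α k)⁻¹ * v k + ∑ j ∈ range k, β j * u j - ∑ j ∈ range k, β j * b j := fun k => by
    simp only [β, mul_sub, sum_sub_distrib]; ring
  simp only [hsplit] at hW
  obtain ⟨C, hC⟩ := (hW.add hβb.hasSum.tendsto_sum_nat).bddAbove_range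
  have hβu : Summable fun j => β j * u j := by
    refine summable_of_sum_range_le (c := C) (fun j => mul_nonneg (hβ0 j) (hu j)) fun k => ?_
    have hCk := hC (Set.mem_range_self k)
    beta_reduce at hCk
    linarith [mul_nonneg (inv_nonneg.2 (hαpos k).le) (hv k)]
  constructor
  · have hβv : Tendsto (fun k => (α k)⁻¹ * v k) atTop
        (𝓝 (l - (∑' j, β j * u j - ∑' j, β j * b j))) := by
      convert hW.sub (hβu.hasSum.tendsto_sum_nat.sub hβb.hasSum.tendsto_sum_nat) using 1
      ext k; ring
    refine ⟨_, (hαL.mul hβv).congr fun k => ?_⟩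
    exact mul_inv_cancel_left₀ (hαpos k).ne' _
  · refine (hβu.mul_left M).of_nonneg_of_le hu fun j => ?_
    calc u j = α (j + 1) * (β j * u j) := (mul_inv_cancel_left₀ (hαpos _).ne' _).symm
      _ ≤ M * (β j * u j) := mul_le_mul_of_nonneg_right (hαM _) (mul_nonneg (hβ0 j) (hu j))

section

variable {Ω : Type*}

noncomputable def growthFactor (a : ℕ → Ω → ℝ) (k : ℕ) (ω : Ω) : ℝ := ∏ j ∈ range k, (1 + a j ω)

noncomputable def robbinsSiegmundProcess (v u a b : ℕ → Ω → ℝ) (k : ℕ) (ω : Ω) : ℝ :=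
  (growthFactor a k ω)⁻¹ * v k ω + ∑ j ∈ range k, (growthFactor a (j + 1) ω)⁻¹ * (u j ω - b j ω)

variable {v u a b : ℕ → Ω → ℝ}

lemma growthFactor_succ (k : ℕ) (ω : Ω) :
    growthFactor a (k + 1) ω = growthFactor a k ω * (1 + a k ω) :=
  prod_range_succ _ _

lemma monotone_growthFactor (ha : ∀ k ω, 0 ≤ a k ω) (ω : Ω) :
    Monotone fun k => growthFactor a k ω :=
  monotone_nat_of_le_succ fun k => by
    rw [growthFactor_succ]
    exact le_mul_of_one_le_right (prod_nonneg fun j _ => by linarith [ha j ω])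
      (by linarith [ha k ω])

lemma one_le_growthFactor (ha : ∀ k ω, 0 ≤ a k ω) (k : ℕ) (ω : Ω) : 1 ≤ growthFactor a k ω :=
  monotone_growthFactor ha ω (Nat.zero_le k)

lemma inv_growthFactor_nonneg (ha : ∀ k ω, 0 ≤ a k ω) (k : ℕ) (ω : Ω) :
    0 ≤ (growthFactor a k ω)⁻¹ :=
  inv_nonneg.2 (zero_le_one.trans (one_le_growthFactor ha k ω))

lemma inv_growthFactor_le_one (ha : ∀ k ω, 0 ≤ a k ω) (k : ℕ) (ω : Ω) :
    (growthFactor a k ω)⁻¹ ≤ 1 :=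
  inv_le_one_of_one_le₀ (one_le_growthFactor ha k ω)

lemma growthFactor_le_exp_sum (ha : ∀ k ω, 0 ≤ a k ω) (k : ℕ) (ω : Ω) :
    growthFactor a k ω ≤ Real.exp (∑ j ∈ range k, a j ω) :=
  Real.prod_one_add_le_exp_sum _ fun j => ha j ω

lemma neg_sum_le_robbinsSiegmundProcess (hv : ∀ k ω, 0 ≤ v k ω) (hu : ∀ k ω, 0 ≤ u k ω)
    (ha : ∀ k ω, 0 ≤ a k ω) (hb : ∀ k ω, 0 ≤ b k ω) (k : ℕ) (ω : Ω) :
    -∑ j ∈ range k, b j ω ≤ robbinsSiegmundProcess v u a b k ω := by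
  have hv' := mul_nonneg (inv_growthFactor_nonneg ha k ω) (hv k ω)
  have hsum : ∀ j ∈ range k, -b j ω ≤ (growthFactor a (j + 1) ω)⁻¹ * (u j ω - b j ω) :=
    fun j _ => by
      nlinarith [inv_growthFactor_nonneg ha (j + 1) ω, inv_growthFactor_le_one ha (j + 1) ω,
        hu j ω, hb j ω]
  rw [← sum_neg_distrib]
  unfold robbinsSiegmundProcess
  linarith [sum_le_sum hsum]

lemma robbinsSiegmundProcess_eq_inv_growthFactor_succ_mul_add (ha : ∀ k ω, 0 ≤ a k ω)
    (k : ℕ) (ω : Ω) :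
    robbinsSiegmundProcess v u a b k ω =
      (growthFactor a (k + 1) ω)⁻¹ * ((1 + a k ω) * v k ω - u k ω + b k ω) +
        ∑ j ∈ range (k + 1), (growthFactor a (j + 1) ω)⁻¹ * (u j ω - b j ω) := by
  have h1 : 1 + a k ω ≠ 0 := by linarith [ha k ω]
  have h2 : growthFactor a k ω ≠ 0 := (zero_lt_one.trans_le (one_le_growthFactor ha k ω)).ne'
  rw [robbinsSiegmundProcess, sum_range_succ, growthFactor_succ]
  field_simp
  ring

variable {m0 : MeasurableSpace Ω} {μ : Measure Ω} {ℱ : Filtration ℕ m0}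

lemma measurable_growthFactor (ha : Adapted ℱ a) {j k : ℕ} (hjk : j ≤ k + 1) :
    Measurable[ℱ k] (growthFactor a j) :=
  Finset.measurable_prod _ fun i hi =>
    measurable_const.add ((ha i).mono (ℱ.mono (by grind)) le_rfl)

lemma measurable_sum_inv_growthFactor_mul (hu : Adapted ℱ u) (ha : Adapted ℱ a)
    (hb : Adapted ℱ b) {n k : ℕ} (hnk : n ≤ k + 1) :
    Measurable[ℱ k] fun ω => ∑ j ∈ range n, (growthFactor a (j + 1) ω)⁻¹ * (u j ω - b j ω) := by
  refine Finset.measurable_sum _ fun j hj => ?_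
  have hjk : ℱ j ≤ ℱ k := ℱ.mono (by grind)
  exact (measurable_growthFactor ha (by grind)).inv.mul
    (((hu j).mono hjk le_rfl).sub ((hb j).mono hjk le_rfl))

lemma measurable_robbinsSiegmundProcess (hv : Adapted ℱ v) (hu : Adapted ℱ u) (ha : Adapted ℱ a)
    (hb : Adapted ℱ b) (k : ℕ) : Measurable[ℱ k] (robbinsSiegmundProcess v u a b k) :=
  ((measurable_growthFactor ha k.le_succ).inv.mul (hv k)).add
    (measurable_sum_inv_growthFactor_mul hu ha hb k.le_succ)

lemma integrable_inv_growthFactor_mul (ha : Adapted ℱ a) (ha0 : ∀ k ω, 0 ≤ a k ω)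
    {f : Ω → ℝ} (hf : Integrable f μ) (j : ℕ) :
    Integrable (fun ω => (growthFactor a j ω)⁻¹ * f ω) μ :=
  hf.bdd_mul ((measurable_growthFactor ha j.le_succ).inv.mono (ℱ.le j) le_rfl).aestronglyMeasurable
    (ae_of_all _ fun ω => by
      rw [Real.norm_of_nonneg (inv_growthFactor_nonneg ha0 j ω)]
      exact inv_growthFactor_le_one ha0 j ω)

lemma integrable_robbinsSiegmundProcess (ha : Adapted ℱ a) (ha0 : ∀ k ω, 0 ≤ a k ω)
    (hvi : ∀ k, Integrable (v k) μ) (hui : ∀ k, Integrable (u k) μ)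
    (hbi : ∀ k, Integrable (b k) μ) (k : ℕ) : Integrable (robbinsSiegmundProcess v u a b k) μ :=
  (integrable_inv_growthFactor_mul ha ha0 (hvi k) k).add
    (integrable_finsetSum _ fun j _ =>
      integrable_inv_growthFactor_mul ha ha0 ((hui j).sub (hbi j)) _)

theorem supermartingale_robbinsSiegmundProcess [IsFiniteMeasure μ] (hv : Adapted ℱ v)
    (hu : Adapted ℱ u) (ha : Adapted ℱ a) (hb : Adapted ℱ b) (hvi : ∀ k, Integrable (v k) μ)
    (hui : ∀ k, Integrable (u k) μ) (hbi : ∀ k, Integrable (b k) μ) (ha0 : ∀ k ω, 0 ≤ a k ω)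
    (hcond : ∀ k, μ[v (k + 1) | ℱ k] ≤ᵐ[μ] fun ω => (1 + a k ω) * v k ω - u k ω + b k ω) :
    Supermartingale (robbinsSiegmundProcess v u a b) ℱ μ := by
  refine supermartingale_nat
    (fun k => (measurable_robbinsSiegmundProcess hv hu ha hb k).stronglyMeasurable)
    (integrable_robbinsSiegmundProcess ha ha0 hvi hui hbi) fun k => ?_
  set g : Ω → ℝ := fun ω => (growthFactor a (k + 1) ω)⁻¹
  set h : Ω → ℝ := fun ω =>
    ∑ j ∈ range (k + 1), (growthFactor a (j + 1) ω)⁻¹ * (u j ω - b j ω)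
  have hsplit : robbinsSiegmundProcess v u a b (k + 1) = g * v (k + 1) + h := rfl
  have hg : StronglyMeasurable[ℱ k] g := (measurable_growthFactor ha le_rfl).inv.stronglyMeasurable
  have hh : StronglyMeasurable[ℱ k] h :=
    (measurable_sum_inv_growthFactor_mul hu ha hb le_rfl).stronglyMeasurable
  have hgb : ∀ᵐ ω ∂μ, ‖g ω‖ ≤ 1 := ae_of_all _ fun ω => by
    rw [Real.norm_of_nonneg (inv_growthFactor_nonneg ha0 _ ω)]
    exact inv_growthFactor_le_one ha0 _ ω
  have hhi : Integrable h μ := integrable_finsetSum _ fun j _ =>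
    integrable_inv_growthFactor_mul ha ha0 ((hui j).sub (hbi j)) _
  have hgvi : Integrable (g * v (k + 1)) μ :=
    integrable_inv_growthFactor_mul ha ha0 (hvi (k + 1)) _
  filter_upwards [condExp_add hgvi hhi (ℱ k),
    condExp_stronglyMeasurable_mul_of_bound (ℱ.le k) hg (hvi (k + 1)) 1 hgb, hcond k]
    with ω hadd hmul hc
  rw [hsplit, hadd, Pi.add_apply, hmul, condExp_of_stronglyMeasurable (ℱ.le k) hh hhi,
    robbinsSiegmundProcess_eq_inv_growthFactor_succ_mul_add ha0 k ω]
  exact add_le_add_left (mul_le_mul_of_nonneg_left hc (inv_growthFactor_nonneg ha0 _ ω)) _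

end

section

variable {Ω : Type*} {m0 : MeasurableSpace Ω} {μ : Measure Ω} {ℱ : Filtration ℕ m0}
  {v u a b : ℕ → Ω → ℝ}

lemma le_of_sum_range_le {f : ℕ → ℝ} {c : ℝ} (hf : ∀ k, 0 ≤ f k)
    (hc : ∀ k, ∑ j ∈ range k, f j ≤ c) (k : ℕ) : f k ≤ c :=
  (single_le_sum (fun j _ => hf j) (self_mem_range_succ k)).trans (hc (k + 1))

theorem ae_tendsto_and_summable_of_sum_le [IsFiniteMeasure μ] {c : ℝ} (hv : Adapted ℱ v)
    (hu : Adapted ℱ u) (ha : Adapted ℱ a) (hb : Adapted ℱ b) (hvi : ∀ k, Integrable (v k) μ)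
    (hv0 : ∀ k ω, 0 ≤ v k ω) (hu0 : ∀ k ω, 0 ≤ u k ω) (ha0 : ∀ k ω, 0 ≤ a k ω)
    (hb0 : ∀ k ω, 0 ≤ b k ω)
    (hcond : ∀ k, μ[v (k + 1) | ℱ k] ≤ᵐ[μ] fun ω => (1 + a k ω) * v k ω - u k ω + b k ω)
    (hac : ∀ k ω, ∑ j ∈ range k, a j ω ≤ c) (hbc : ∀ k ω, ∑ j ∈ range k, b j ω ≤ c) :
    ∀ᵐ ω ∂μ, (∃ l, Tendsto (fun k => v k ω) atTop (𝓝 l)) ∧ Summable fun k => u k ω := by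
  have hac' : ∀ k ω, a k ω ≤ c := fun k ω => le_of_sum_range_le (ha0 · ω) (hac · ω) k
  have hbc' : ∀ k ω, b k ω ≤ c := fun k ω => le_of_sum_range_le (hb0 · ω) (hbc · ω) k
  have hbi : ∀ k, Integrable (b k) μ := fun k =>
    (integrable_const c).mono' ((hb k).mono (ℱ.le k) le_rfl).aestronglyMeasurable
      (ae_of_all _ fun ω => by rw [Real.norm_of_nonneg (hb0 k ω)]; exact hbc' k ω)
  -- `u k ≤ (1 + a k) v k + b k - E[v (k+1) | ℱ k]` and the conditional expectation is nonnegative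
  have hui : ∀ k, Integrable (u k) μ := fun k => by
    refine (((hvi k).const_mul (1 + c)).add (integrable_const c)).mono'
      ((hu k).mono (ℱ.le k) le_rfl).aestronglyMeasurable ?_
    filter_upwards [hcond k, condExp_nonneg (m := ℱ k) (ae_of_all μ (hv0 (k + 1)))]
      with ω hω hω0
    rw [Real.norm_of_nonneg (hu0 k ω), Pi.add_apply]
    rw [Pi.zero_apply] at hω0
    nlinarith [mul_nonneg (sub_nonneg.2 (hac' k ω)) (hv0 k ω), hbc' k ω]
  have hW := (supermartingale_robbinsSiegmundProcess hv hu ha hb hvi hui hbi ha0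
    hcond).exists_ae_tendsto_of_const_le
    fun k ω => (neg_le_neg (hbc k ω)).trans (neg_sum_le_robbinsSiegmundProcess hv0 hu0 ha0 hb0 k ω)
  filter_upwards [hW] with ω ⟨l, hl⟩
  exact exists_tendsto_and_summable_of_tendsto_weighted (monotone_growthFactor ha0 ω)
    (by simp [growthFactor])
    (fun k => (growthFactor_le_exp_sum ha0 k ω).trans (Real.exp_le_exp.2 (hac k ω)))
    (hv0 · ω) (hu0 · ω) (hb0 · ω) (summable_of_sum_range_le (hb0 · ω) (hbc · ω)) hl

end

section

variable {Ω : Type*}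

noncomputable def sumLEIndicator (s : ℕ → Ω → ℝ) (c : ℝ) (k : ℕ) (ω : Ω) : ℝ :=
  if ∑ j ∈ range k, s j ω ≤ c then 1 else 0

variable {s : ℕ → Ω → ℝ} {c : ℝ}

lemma sumLEIndicator_eq_zero_or_one (k : ℕ) (ω : Ω) :
    sumLEIndicator s c k ω = 0 ∨ sumLEIndicator s c k ω = 1 := by
  unfold sumLEIndicator
  split_ifs <;> simp

lemma sumLEIndicator_nonneg (k : ℕ) (ω : Ω) : 0 ≤ sumLEIndicator s c k ω := by
  rcases sumLEIndicator_eq_zero_or_one (s := s) (c := c) k ω with h | h <;> simp [h]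

lemma sumLEIndicator_le_one (k : ℕ) (ω : Ω) : sumLEIndicator s c k ω ≤ 1 := by
  rcases sumLEIndicator_eq_zero_or_one (s := s) (c := c) k ω with h | h <;> simp [h]

lemma sumLEIndicator_succ_le (hs : ∀ k ω, 0 ≤ s k ω) (k : ℕ) (ω : Ω) :
    sumLEIndicator s c (k + 1) ω ≤ sumLEIndicator s c k ω := by
  unfold sumLEIndicator
  split_ifs with hk1 hk <;> norm_num
  rw [sum_range_succ] at hk1
  exact hk (by linarith [hs k ω])

lemma sum_sumLEIndicator_mul_le (hs : ∀ k ω, 0 ≤ s k ω) (hc : 0 ≤ c) {f : ℕ → Ω → ℝ}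
    (hfs : ∀ k ω, f k ω ≤ s k ω) (k : ℕ) (ω : Ω) :
    ∑ j ∈ range k, sumLEIndicator s c (j + 1) ω * f j ω ≤ c := by
  induction k with
  | zero => simpa using hc
  | succ k ih =>
    by_cases hk : ∑ j ∈ range (k + 1), s j ω ≤ c
    · refine le_trans (sum_le_sum fun j _ => ?_) hk
      rcases sumLEIndicator_eq_zero_or_one (s := s) (c := c) (j + 1) ω with h | h <;>
        simp [h, hs j ω, hfs j ω]
    · rw [sum_range_succ, sumLEIndicator, if_neg hk, zero_mul, add_zero]
      exact ih

lemma sumLEIndicator_eq_one (hs : ∀ k ω, 0 ≤ s k ω) {ω : Ω} (hsum : Summable fun k => s k ω)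
    (hc : ∑' j, s j ω ≤ c) (k : ℕ) : sumLEIndicator s c k ω = 1 :=
  if_pos ((hsum.sum_le_tsum _ fun j _ => hs j ω).trans hc)

lemma measurable_sumLEIndicator {m : MeasurableSpace Ω} {k : ℕ}
    (hs : ∀ j < k, Measurable[m] (s j)) : Measurable[m] (sumLEIndicator s c k) :=
  Measurable.ite (measurableSet_le (Finset.measurable_sum _ fun j hj => hs j (mem_range.1 hj))
    measurable_const) measurable_const measurable_const

variable {m0 : MeasurableSpace Ω} {μ : Measure Ω} {ℱ : Filtration ℕ m0} {v u a b : ℕ → Ω → ℝ}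

lemma condExp_truncated_le [IsFiniteMeasure μ] {χ : ℕ → Ω → ℝ}
    (hχ : ∀ k ω, χ k ω = 0 ∨ χ k ω = 1) (hχ_succ : ∀ k ω, χ (k + 1) ω ≤ χ k ω)
    (hχm : ∀ k, Measurable[ℱ k] (χ (k + 1))) (hvi : ∀ k, Integrable (v k) μ)
    (hv0 : ∀ k ω, 0 ≤ v k ω)
    (hcond : ∀ k, μ[v (k + 1) | ℱ k] ≤ᵐ[μ] fun ω => (1 + a k ω) * v k ω - u k ω + b k ω)
    (k : ℕ) :
    μ[fun ω => χ (k + 1) ω * v (k + 1) ω | ℱ k] ≤ᵐ[μ] fun ω =>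
      (1 + χ (k + 1) ω * a k ω) * (χ k ω * v k ω) - χ (k + 1) ω * u k ω +
        χ (k + 1) ω * b k ω := by
  have hχb : ∀ᵐ ω ∂μ, ‖χ (k + 1) ω‖ ≤ 1 := ae_of_all _ fun ω => by
    rcases hχ (k + 1) ω with h | h <;> simp [h]
  filter_upwards [condExp_stronglyMeasurable_mul_of_bound (ℱ.le k) (hχm k).stronglyMeasurable
    (hvi (k + 1)) 1 hχb, hcond k] with ω hmul hω
  change μ[χ (k + 1) * v (k + 1) | ℱ k] ω ≤ _
  rw [hmul, Pi.mul_apply]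
  rcases hχ (k + 1) ω with h | h
  · rcases hχ k ω with h' | h' <;> simp [h, h', hv0 k ω]
  · have h' : χ k ω = 1 := by rcases hχ k ω with h' | h' <;> linarith [hχ_succ k ω]
    simp only [h, h', one_mul]
    exact hω

theorem ae_tendsto_and_summable_of_condExp_le [IsFiniteMeasure μ] (hv : Adapted ℱ v)
    (hu : Adapted ℱ u) (ha : Adapted ℱ a) (hb : Adapted ℱ b) (hvi : ∀ k, Integrable (v k) μ)
    (hv0 : ∀ k ω, 0 ≤ v k ω) (hu0 : ∀ k ω, 0 ≤ u k ω) (ha0 : ∀ k ω, 0 ≤ a k ω)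
    (hb0 : ∀ k ω, 0 ≤ b k ω)
    (hcond : ∀ k, μ[v (k + 1) | ℱ k] ≤ᵐ[μ] fun ω => (1 + a k ω) * v k ω - u k ω + b k ω)
    (hasum : ∀ᵐ ω ∂μ, Summable fun k => a k ω) (hbsum : ∀ᵐ ω ∂μ, Summable fun k => b k ω) :
    ∀ᵐ ω ∂μ, (∃ l, Tendsto (fun k => v k ω) atTop (𝓝 l)) ∧ Summable fun k => u k ω := by
  have hs0 : ∀ k ω, 0 ≤ (a + b) k ω := fun k ω => add_nonneg (ha0 k ω) (hb0 k ω)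
  have htrunc : ∀ n : ℕ, ∀ᵐ ω ∂μ,
      (∃ l, Tendsto (fun k => sumLEIndicator (a + b) n k ω * v k ω) atTop (𝓝 l)) ∧
        Summable fun k => sumLEIndicator (a + b) n (k + 1) ω * u k ω := by
    intro n
    set χ := sumLEIndicator (a + b) (n : ℝ)
    have hχm : ∀ {j k}, j ≤ k + 1 → Measurable[ℱ k] (χ j) := fun hjk =>
      measurable_sumLEIndicator fun i hi => ((ha i).add (hb i)).mono (ℱ.mono (by omega)) le_rfl
    have hχ0 : ∀ k ω, 0 ≤ χ k ω := sumLEIndicator_nonneg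
    exact ae_tendsto_and_summable_of_sum_le (c := n)
      (fun k => (hχm k.le_succ).mul (hv k)) (fun k => (hχm le_rfl).mul (hu k))
      (fun k => (hχm le_rfl).mul (ha k)) (fun k => (hχm le_rfl).mul (hb k))
      (fun k => (hvi k).bdd_mul ((hχm k.le_succ).mono (ℱ.le k) le_rfl).aestronglyMeasurable
        (ae_of_all _ fun ω => by
          rw [Real.norm_of_nonneg (hχ0 k ω)]; exact sumLEIndicator_le_one k ω))
      (fun k ω => mul_nonneg (hχ0 k ω) (hv0 k ω)) (fun k ω => mul_nonneg (hχ0 _ ω) (hu0 k ω))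
      (fun k ω => mul_nonneg (hχ0 _ ω) (ha0 k ω)) (fun k ω => mul_nonneg (hχ0 _ ω) (hb0 k ω))
      (condExp_truncated_le sumLEIndicator_eq_zero_or_one (sumLEIndicator_succ_le hs0)
        (fun k => hχm le_rfl) hvi hv0 hcond)
      (sum_sumLEIndicator_mul_le hs0 n.cast_nonneg fun k ω => by simp [hb0 k ω])
      (sum_sumLEIndicator_mul_le hs0 n.cast_nonneg fun k ω => by simp [ha0 k ω])
  filter_upwards [ae_all_iff.2 htrunc, hasum, hbsum] with ω hω haω hbω
  obtain ⟨n, hn⟩ := exists_nat_ge (∑' j, (a + b) j ω)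
  have hχ1 : ∀ k, sumLEIndicator (a + b) n k ω = 1 :=
    sumLEIndicator_eq_one hs0 (haω.add hbω) hn
  simpa [hχ1] using hω n

end

section

variable {Ω : Type*} {m0 : MeasurableSpace Ω}

def MeasureTheory.Filtration.accumulate (G : ℕ → MeasurableSpace Ω) (hG : ∀ j, G j ≤ m0) :
    Filtration ℕ m0 where
  seq k := ⨆ j ∈ range (k + 1), G j
  mono' _ _ hkl := biSup_mono fun j hj => by simp only [mem_range] at hj ⊢; omega
  le' _ := iSup₂_le fun j _ => hG j

lemma MeasureTheory.Filtration.le_accumulate {G : ℕ → MeasurableSpace Ω} (hG : ∀ j, G j ≤ m0)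
    {j k : ℕ} (hjk : j ≤ k) : G j ≤ Filtration.accumulate G hG k :=
  le_iSup₂_of_le (f := fun i (_ : i ∈ range (k + 1)) => G i) j (mem_range.2 (by omega)) le_rfl

end

/-- **Robbins–Siegmund supermartingale convergence theorem.**
Let `v, u, a, b` be sequences of nonnegative (integrable) random variables with
`E[v (k+1) | F k] ≤ (1 + a k) v k − u k + b k` a.s. for all `k`, where `F k` is the
σ-algebra generated by `v 0, …, v k, u 0, …, u k, a 0, …, a k, b 0, …, b k`.
If `∑ a k < ∞` and `∑ b k < ∞` a.s., then `v k` converges a.s. to a nonnegative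
random variable and `∑ u k < ∞` a.s. -/
theorem robbins_siegmund
    {Ω : Type*} [m0 : MeasurableSpace Ω] (μ : Measure Ω) [IsProbabilityMeasure μ]
    (v u a b : ℕ → Ω → ℝ)
    (hvm : ∀ k, Measurable (v k)) (hum : ∀ k, Measurable (u k))
    (ham : ∀ k, Measurable (a k)) (hbm : ∀ k, Measurable (b k))
    (hvi : ∀ k, Integrable (v k) μ)
    (hv0 : ∀ k ω, 0 ≤ v k ω) (hu0 : ∀ k ω, 0 ≤ u k ω)
    (ha0 : ∀ k ω, 0 ≤ a k ω) (hb0 : ∀ k ω, 0 ≤ b k ω)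
    (F : ℕ → MeasurableSpace Ω)
    (hF : ∀ k, F k = ⨆ j ∈ Finset.range (k + 1),
      (MeasurableSpace.comap (v j) inferInstance ⊔ MeasurableSpace.comap (u j) inferInstance ⊔
        MeasurableSpace.comap (a j) inferInstance ⊔ MeasurableSpace.comap (b j) inferInstance))
    (hcond : ∀ k, ∀ᵐ ω ∂μ,
      (μ[v (k + 1) | F k]) ω ≤ (1 + a k ω) * v k ω - u k ω + b k ω)
    (hasum : ∀ᵐ ω ∂μ, Summable fun k => a k ω)
    (hbsum : ∀ᵐ ω ∂μ, Summable fun k => b k ω) :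
    (∃ vlim : Ω → ℝ, ∀ᵐ ω ∂μ, 0 ≤ vlim ω ∧
        Tendsto (fun k => v k ω) atTop (nhds (vlim ω))) ∧
      ∀ᵐ ω ∂μ, Summable fun k => u k ω := by
  obtain rfl : F = _ := funext hF
  set G : ℕ → MeasurableSpace Ω := fun j =>
    MeasurableSpace.comap (v j) inferInstance ⊔ MeasurableSpace.comap (u j) inferInstance ⊔
      MeasurableSpace.comap (a j) inferInstance ⊔ MeasurableSpace.comap (b j) inferInstance
  have hG : ∀ j, G j ≤ m0 := fun j => sup_le (sup_le (sup_le (hvm j).comap_le (hum j).comap_le)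
    (ham j).comap_le) (hbm j).comap_le
  set ℱ := Filtration.accumulate G hG
  have hGℱ : ∀ k, G k ≤ ℱ k := fun k => Filtration.le_accumulate hG le_rfl
  have hconv := ae_tendsto_and_summable_of_condExp_le (ℱ := ℱ)
    (fun k => measurable_iff_comap_le.2 <|
      (le_sup_left.trans (le_sup_left.trans le_sup_left)).trans (hGℱ k))
    (fun k => measurable_iff_comap_le.2 <|
      (le_sup_right.trans (le_sup_left.trans le_sup_left)).trans (hGℱ k))
    (fun k => measurable_iff_comap_le.2 <| (le_sup_right.trans le_sup_left).trans (hGℱ k))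
    (fun k => measurable_iff_comap_le.2 <| le_sup_right.trans (hGℱ k))
    hvi hv0 hu0 ha0 hb0 hcond hasum hbsum
  refine ⟨⟨fun ω => limUnder atTop fun k => v k ω, ?_⟩, hconv.mono fun _ h => h.2⟩
  filter_upwards [hconv] with ω hω
  have hlim := tendsto_nhds_limUnder hω.1
  exact ⟨ge_of_tendsto' hlim fun k => hv0 k ω, hlim⟩
end

section
/- Let Y ⊆ ℝ^d be a nonempty closed convex set, and let φ: ℝ^d → ℝ be convex and differentiable with L-Lipschitz continuous gradient on ℝ^d. Let x ∈ ℝ^d, α > 0, and set y = Π_Y[x − α∇φ(x)], where Π_Y denotes the Euclidean projection onto Y. Then for any x̌ ∈ Y, any z ∈ ℝ^d and any τ > 0: ‖y − x̌‖² ≤ (1 + A_τ α²)‖x − x̌‖² − 2α(φ(z) − φ(x̌)) − (3/4)‖y − x‖² + (3/(8τ) + 2αL)‖x − z‖² + B_τ α² ‖∇φ(x̌)‖², where A_τ = 8L² + 16τL² and B_τ = 8τ + 8. -/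
/-!
Projection onto a convex set is characterised by `⟪p - y, w - y⟫ ≤ 0` for `w ∈ Y`, which for
`p = x - α ∇φ(x)` gives `‖y - x̌‖² ≤ ‖x - x̌‖² - ‖y - x‖² - 2α ⟪∇φ(x), y - x̌⟫`. The cross term is
split along `y - x`, `x - z`, `z - x̌`, with `∇φ(x)` replaced by `∇φ(z)` on the last piece: that
piece is controlled by the gradient inequality `φ(z) + ⟪∇φ(z), x̌ - z⟫ ≤ φ(x̌)`, the correction
`∇φ(x) - ∇φ(z)` by the Lipschitz bound, and the remaining products by Young's inequality with
weights `4`, `4τ`, `8τ`. Finally `‖∇φ(x)‖² ≤ 2‖∇φ(x̌)‖² + 2L²‖x - x̌‖²`.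
-/

open Set
open scoped InnerProductSpace

theorem ConvexOn.add_fderiv_sub_le {E : Type*} [NormedAddCommGroup E] [NormedSpace ℝ E]
    {s : Set E} {f : E → ℝ} {f' : E →L[ℝ] ℝ} {a b : E} (hf : ConvexOn ℝ s f) (ha : a ∈ s)
    (hb : b ∈ s) (hf' : HasFDerivAt f f' a) :
    f a + f' (b - a) ≤ f b := by
  let ℓ : ℝ →ᵃ[ℝ] E := AffineMap.lineMap a b
  have hderiv : HasDerivAt (f ∘ ℓ) (f' (b - a)) 0 := by
    refine HasFDerivAt.comp_hasDerivAt (0 : ℝ) ?_ AffineMap.hasDerivAt_lineMap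
    simpa [ℓ] using hf'
  have hslope := (hf.comp_affineMap ℓ).le_slope_of_hasDerivAt (by simpa [ℓ] using ha)
    (by simpa [ℓ] using hb) zero_lt_one hderiv
  rw [slope_def_field, Function.comp_apply, Function.comp_apply, AffineMap.lineMap_apply_one,
    AffineMap.lineMap_apply_zero, sub_zero, div_one] at hslope
  linarith

theorem ConvexOn.add_inner_le_of_hasGradientAt {E : Type*} [NormedAddCommGroup E]
    [InnerProductSpace ℝ E] [CompleteSpace E] {s : Set E} {f : E → ℝ} {g a b : E}
    (hf : ConvexOn ℝ s f) (ha : a ∈ s) (hb : b ∈ s) (hg : HasGradientAt f g a) :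
    f a + ⟪g, b - a⟫_ℝ ≤ f b := by
  simpa using hf.add_fderiv_sub_le ha hb hg.hasFDerivAt

theorem sq_norm_le_of_norm_sub_le {E : Type*} [SeminormedAddGroup E] {a b : E} {L r : ℝ}
    (h : ‖a - b‖ ≤ L * r) :
    ‖a‖ ^ 2 ≤ 2 * (‖b‖ ^ 2 + L ^ 2 * r ^ 2) := by
  calc ‖a‖ ^ 2 ≤ (‖b‖ + L * r) ^ 2 := by
        gcongr
        exact (norm_le_norm_add_norm_sub' a b).trans (by gcongr)
    _ ≤ 2 * (‖b‖ ^ 2 + L ^ 2 * r ^ 2) := by rw [← mul_pow]; exact add_sq_le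

section InnerProductSpace

variable {E : Type*} [NormedAddCommGroup E] [InnerProductSpace ℝ E]

theorem real_inner_sub_nonpos_of_forall_norm_sub_le {K : Set E} (hK : Convex ℝ K) {u v : E}
    (hv : v ∈ K) (hmin : ∀ w ∈ K, ‖v - u‖ ≤ ‖w - u‖) {w : E} (hw : w ∈ K) :
    ⟪u - v, w - v⟫_ℝ ≤ 0 := by
  have : Nonempty K := ⟨⟨v, hv⟩⟩
  refine (norm_eq_iInf_iff_real_inner_le_zero hK hv).mp (le_antisymm ?_ ?_) w hw
  · refine le_ciInf fun w => ?_
    simpa only [norm_sub_rev u] using hmin w w.2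
  · exact ciInf_le ⟨0, forall_mem_range.2 fun _ => norm_nonneg _⟩ (⟨v, hv⟩ : K)

theorem norm_sub_sq_le_of_forall_norm_sub_le {K : Set E} (hK : Convex ℝ K) {x u y v : E}
    {α : ℝ} (hy : y ∈ K) (hmin : ∀ w ∈ K, ‖y - (x - α • u)‖ ≤ ‖w - (x - α • u)‖) (hv : v ∈ K) :
    ‖y - v‖ ^ 2 ≤ ‖x - v‖ ^ 2 - ‖y - x‖ ^ 2 - 2 * α * ⟪u, y - v⟫_ℝ := by
  have hproj := real_inner_sub_nonpos_of_forall_norm_sub_le hK hy hmin hv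
  have hinner : ⟪x - α • u - y, v - y⟫_ℝ = α * ⟪u, y - v⟫_ℝ - ⟪x - y, y - v⟫_ℝ := by
    rw [show x - α • u - y = (x - y) - α • u by abel, ← neg_sub y v, inner_neg_right,
      inner_sub_left, real_inner_smul_left]
    ring
  have hsplit : ‖x - v‖ ^ 2 = ‖x - y‖ ^ 2 + 2 * ⟪x - y, y - v⟫_ℝ + ‖y - v‖ ^ 2 := by
    rw [← norm_add_sq_real, sub_add_sub_cancel]
  rw [norm_sub_rev y x]
  linarith

theorem neg_two_mul_inner_le_of_lipschitz {φ : E → ℝ} {g : E → E} {L α τ : ℝ}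
    {x y v z : E} (hα : 0 ≤ α) (hτ : 0 < τ) (hz : φ z + ⟪g z, v - z⟫_ℝ ≤ φ v)
    (hLip : ‖g x - g z‖ ≤ L * ‖x - z‖) :
    -(2 * α * ⟪g x, y - v⟫_ℝ) ≤ ‖y - x‖ ^ 2 / 4 + (3 / (8 * τ) + 2 * α * L) * ‖x - z‖ ^ 2
      + 4 * (1 + τ) * α ^ 2 * ‖g x‖ ^ 2 + 8 * τ * α ^ 2 * L ^ 2 * ‖x - v‖ ^ 2
      - 2 * α * (φ z - φ v) := by
  have hsplit : ⟪g x, y - v⟫_ℝ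
      = ⟪g x, y - x⟫_ℝ + ⟪g x, x - z⟫_ℝ + ⟪g x - g z, z - v⟫_ℝ - ⟪g z, v - z⟫_ℝ := by
    simp only [inner_sub_left, inner_sub_right]
    ring
  have h₁ : -⟪g x, y - x⟫_ℝ ≤ ‖g x‖ * ‖y - x‖ :=
    (neg_le_abs _).trans (abs_real_inner_le_norm _ _)
  have h₂ : -⟪g x, x - z⟫_ℝ ≤ ‖g x‖ * ‖x - z‖ :=
    (neg_le_abs _).trans (abs_real_inner_le_norm _ _)
  have h₃ : -⟪g x - g z, z - v⟫_ℝ ≤ L * ‖x - z‖ * (‖x - z‖ + ‖x - v‖) :=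
    calc -⟪g x - g z, z - v⟫_ℝ ≤ ‖g x - g z‖ * ‖z - v‖ :=
          (neg_le_abs _).trans (abs_real_inner_le_norm _ _)
      _ ≤ L * ‖x - z‖ * (‖x - z‖ + ‖x - v‖) := by
          gcongr
          · exact (norm_nonneg _).trans hLip
          · simpa only [norm_sub_rev z x] using norm_sub_le_norm_sub_add_norm_sub z x v
  have hsum : -⟪g x, y - v⟫_ℝ ≤ ‖g x‖ * ‖y - x‖ + ‖g x‖ * ‖x - z‖
      + L * ‖x - z‖ * (‖x - z‖ + ‖x - v‖) + (φ v - φ z) := by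
    linarith
  have hscaled := mul_le_mul_of_nonneg_left hsum (by positivity : 0 ≤ 2 * α)
  have young₁ := two_mul_le_add_mul_sq (a := α * ‖g x‖) (b := ‖y - x‖) four_pos
  have young₂ := two_mul_le_add_mul_sq (a := α * ‖g x‖) (b := ‖x - z‖)
    (by positivity : 0 < 4 * τ)
  have young₃ := two_mul_le_add_mul_sq (a := α * L * ‖x - v‖) (b := ‖x - z‖)
    (by positivity : 0 < 8 * τ)
  have hτ_inv : (4 * τ)⁻¹ + (8 * τ)⁻¹ = 3 / (8 * τ) := by
    field_simp
    norm_num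
  linear_combination hscaled + young₁ + young₂ + young₃ + ‖x - z‖ ^ 2 * hτ_inv

end InnerProductSpace

theorem projected_gradient_basic_relation_general {d : ℕ}
    (Y : Set (EuclideanSpace ℝ (Fin d)))
    (hYconvex : Convex ℝ Y)
    (φ : EuclideanSpace ℝ (Fin d) → ℝ)
    (g : EuclideanSpace ℝ (Fin d) → EuclideanSpace ℝ (Fin d))
    (hconv : ConvexOn ℝ Set.univ φ)
    (hgrad : ∀ w, HasGradientAt φ (g w) w)
    (L : ℝ)
    (hLip : ∀ w w', ‖g w - g w'‖ ≤ L * ‖w - w'‖)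
    (x y : EuclideanSpace ℝ (Fin d)) (α : ℝ) (hα : 0 < α)
    (hy : y ∈ Y ∧ ∀ w ∈ Y, ‖y - (x - α • g x)‖ ≤ ‖w - (x - α • g x)‖)
    (xch : EuclideanSpace ℝ (Fin d)) (hxch : xch ∈ Y)
    (z : EuclideanSpace ℝ (Fin d)) (τ : ℝ) (hτ : 0 < τ) :
    ‖y - xch‖ ^ 2 ≤ (1 + (8 * L ^ 2 + 16 * τ * L ^ 2) * α ^ 2) * ‖x - xch‖ ^ 2
      - 2 * α * (φ z - φ xch) - (3 / 4) * ‖y - x‖ ^ 2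
      + (3 / (8 * τ) + 2 * α * L) * ‖x - z‖ ^ 2
      + (8 * τ + 8) * α ^ 2 * ‖g xch‖ ^ 2 := by
  have hstep := norm_sub_sq_le_of_forall_norm_sub_le hYconvex hy.1 hy.2 hxch
  have hgrad_ineq := hconv.add_inner_le_of_hasGradientAt (mem_univ z) (mem_univ xch) (hgrad z)
  have hcross := neg_two_mul_inner_le_of_lipschitz (y := y) hα.le hτ hgrad_ineq
    (hLip x z)
  have hgx := mul_le_mul_of_nonneg_left (sq_norm_le_of_norm_sub_le (hLip x xch))
    (by positivity : 0 ≤ 4 * (1 + τ) * α ^ 2)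
  linear_combination hstep + hcross + hgx

/-- **Basic relation for one projected-gradient step** (Lemma 1 of Nedić 2011).
Let `Y ⊆ ℝ^d` be nonempty, closed and convex, let `φ` be convex and differentiable with
`L`-Lipschitz gradient `g`, and let `y = Π_Y[x − α g(x)]`.  Then for any `xch ∈ Y`, `z ∈ ℝ^d`
and `τ > 0`,
`‖y − xch‖² ≤ (1 + A_τ α²)‖x − xch‖² − 2α(φ(z) − φ(xch)) − (3/4)‖y − x‖²
  + (3/(8τ) + 2αL)‖x − z‖² + B_τ α² ‖g(xch)‖²`,
where `A_τ = 8L² + 16τL²` and `B_τ = 8τ + 8`. -/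
theorem projected_gradient_basic_relation {d : ℕ}
    (Y : Set (EuclideanSpace ℝ (Fin d)))
    (hYne : Y.Nonempty) (hYclosed : IsClosed Y) (hYconvex : Convex ℝ Y)
    (φ : EuclideanSpace ℝ (Fin d) → ℝ)
    (g : EuclideanSpace ℝ (Fin d) → EuclideanSpace ℝ (Fin d))
    (hconv : ConvexOn ℝ Set.univ φ)
    (hgrad : ∀ w, HasGradientAt φ (g w) w)
    (L : ℝ) (hL : 0 ≤ L)
    (hLip : ∀ w w', ‖g w - g w'‖ ≤ L * ‖w - w'‖)
    (x y : EuclideanSpace ℝ (Fin d)) (α : ℝ) (hα : 0 < α)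
    (hy : y ∈ Y ∧ ∀ w ∈ Y, ‖y - (x - α • g x)‖ ≤ ‖w - (x - α • g x)‖)
    (xch : EuclideanSpace ℝ (Fin d)) (hxch : xch ∈ Y)
    (z : EuclideanSpace ℝ (Fin d)) (τ : ℝ) (hτ : 0 < τ) :
    ‖y - xch‖ ^ 2 ≤ (1 + (8 * L ^ 2 + 16 * τ * L ^ 2) * α ^ 2) * ‖x - xch‖ ^ 2
      - 2 * α * (φ z - φ xch) - (3 / 4) * ‖y - x‖ ^ 2
      + (3 / (8 * τ) + 2 * α * L) * ‖x - z‖ ^ 2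
      + (8 * τ + 8) * α ^ 2 * ‖g xch‖ ^ 2 :=
  projected_gradient_basic_relation_general Y hYconvex φ g hconv hgrad L hLip x y α hα hy xch hxch z
    τ hτ
end

section
/- Let X and Y be nonempty closed convex subsets of ℝ^d with X ⊆ Y. Let f: ℝ^d → ℝ be convex and differentiable with L-Lipschitz continuous gradient on ℝ^d, and suppose ‖∇f(x)‖ ≤ G for all x ∈ X. Let v ∈ ℝ^d, α > 0, c > 0, and set x⁺ = Π_Y[v − α∇f(v)]. Then dist²(x⁺, X) ≤ (1 + Aα²) dist²(v, X) − (3/4) dist²(v, Y) + (3/(8c) + 2αL) dist²(v, X) + B α² G², where A = 8L² + 16cL² and B = 8c + 8. -/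
open Metric RealInnerProductSpace

set_option maxHeartbeats 1600000 in
/-- **Distance estimate for one random-projection gradient step.**
Let `X ⊆ Y ⊆ ℝ^d` be nonempty closed convex sets, `f` convex and differentiable with
`L`-Lipschitz gradient `g`, with `‖g x‖ ≤ G` on `X`.  If `x⁺ = Π_Y[v − α g(v)]`, then
`dist²(x⁺, X) ≤ (1 + Aα²) dist²(v, X) − (3/4) dist²(v, Y)
  + (3/(8c) + 2αL) dist²(v, X) + B α² G²`
with `A = 8L² + 16cL²` and `B = 8c + 8`. -/
theorem projected_gradient_dist_estimate {d : ℕ}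
    (X Y : Set (EuclideanSpace ℝ (Fin d)))
    (hXne : X.Nonempty) (hXclosed : IsClosed X) (hXconvex : Convex ℝ X)
    (hYne : Y.Nonempty) (hYclosed : IsClosed Y) (hYconvex : Convex ℝ Y)
    (hXY : X ⊆ Y)
    (f : EuclideanSpace ℝ (Fin d) → ℝ)
    (g : EuclideanSpace ℝ (Fin d) → EuclideanSpace ℝ (Fin d))
    (hconv : ConvexOn ℝ Set.univ f)
    (hgrad : ∀ w, HasGradientAt f (g w) w)
    (L : ℝ) (hL : 0 ≤ L)
    (hLip : ∀ w w', ‖g w - g w'‖ ≤ L * ‖w - w'‖)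
    (G : ℝ) (hG : ∀ x ∈ X, ‖g x‖ ≤ G)
    (v xplus : EuclideanSpace ℝ (Fin d)) (α : ℝ) (hα : 0 < α) (c : ℝ) (hc : 0 < c)
    (hxplus : xplus ∈ Y ∧ ∀ w ∈ Y, ‖xplus - (v - α • g v)‖ ≤ ‖w - (v - α • g v)‖) :
    (infDist xplus X) ^ 2 ≤
      (1 + (8 * L ^ 2 + 16 * c * L ^ 2) * α ^ 2) * (infDist v X) ^ 2
      - (3 / 4) * (infDist v Y) ^ 2
      + (3 / (8 * c) + 2 * α * L) * (infDist v X) ^ 2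
      + (8 * c + 8) * α ^ 2 * G ^ 2 := by
  obtain ⟨xb, hxbX, hxbd⟩ := hXclosed.exists_infDist_eq_dist hXne v
  set u : EuclideanSpace ℝ (Fin d) := v - α • g v with hu
  set a : ℝ := infDist v X with ha
  set b : ℝ := infDist v Y with hb
  set n : ℝ := ‖g v‖ with hn
  have ha0 : 0 ≤ a := infDist_nonneg
  have hb0 : 0 ≤ b := infDist_nonneg
  have hn0 : 0 ≤ n := norm_nonneg _
  have hG0 : 0 ≤ G := le_trans (norm_nonneg _) (hG xb hxbX)
  have havx : a = ‖v - xb‖ := by rw [hxbd, dist_eq_norm]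
  -- variational inequality for the projection
  have hvar : ∀ w ∈ Y, ⟪u - xplus, w - xplus⟫ ≤ 0 := by
    haveI : Nonempty Y := ⟨⟨xplus, hxplus.1⟩⟩
    rw [← norm_eq_iInf_iff_real_inner_le_zero hYconvex hxplus.1]
    apply le_antisymm
    · apply le_ciInf
      intro w
      rw [norm_sub_rev u xplus, norm_sub_rev u (w : EuclideanSpace ℝ (Fin d))]
      exact hxplus.2 w w.2
    · have hbdd : BddBelow (Set.range fun w : Y => ‖u - (w : EuclideanSpace ℝ (Fin d))‖) := by
        refine ⟨0, ?_⟩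
        rintro x ⟨w, rfl⟩
        exact norm_nonneg _
      exact ciInf_le hbdd ⟨xplus, hxplus.1⟩
  have hvarxb : ⟪u - xplus, xb - xplus⟫ ≤ 0 := hvar xb (hXY hxbX)
  -- projection inequality: ‖xplus - xb‖² + ‖u - xplus‖² ≤ ‖u - xb‖²
  have hproj : ‖xb - xplus‖ ^ 2 + ‖u - xplus‖ ^ 2 ≤ ‖u - xb‖ ^ 2 := by
    have h := norm_sub_sq_real (u - xplus) (xb - xplus)
    rw [show (u - xplus) - (xb - xplus) = u - xb by abel] at h
    nlinarith [hvarxb]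
  -- expansion of ‖u - xb‖²
  have hexp : ‖u - xb‖ ^ 2 = a ^ 2 - 2 * (α * ⟪g v, v - xb⟫) + α ^ 2 * n ^ 2 := by
    have h1 : u - xb = (v - xb) - α • g v := by rw [hu]; abel
    rw [h1, norm_sub_sq_real, real_inner_smul_right, norm_smul, real_inner_comm, havx,
      Real.norm_eq_abs, abs_of_pos hα]
    ring
  -- Cauchy-Schwarz + Lipschitz bound
  have hcs : -⟪g v, v - xb⟫ ≤ G * a + L * a ^ 2 := by
    have hsplit : ⟪g v, v - xb⟫ = ⟪g xb, v - xb⟫ + ⟪g v - g xb, v - xb⟫ := by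
      rw [← inner_add_left]; congr 1; abel
    have h1 := abs_real_inner_le_norm (g xb) (v - xb)
    have h2 := abs_real_inner_le_norm (g v - g xb) (v - xb)
    have h3 : ‖g xb‖ * ‖v - xb‖ ≤ G * a := by
      rw [← havx]; exact mul_le_mul_of_nonneg_right (hG xb hxbX) (havx ▸ ha0)
    have h4 : ‖g v - g xb‖ * ‖v - xb‖ ≤ L * a ^ 2 := by
      calc ‖g v - g xb‖ * ‖v - xb‖ ≤ (L * ‖v - xb‖) * ‖v - xb‖ :=
            mul_le_mul_of_nonneg_right (hLip v xb) (norm_nonneg _)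
        _ = L * a ^ 2 := by rw [← havx]; ring
    have n1 := neg_le_abs ⟪g xb, v - xb⟫
    have n2 := neg_le_abs ⟪g v - g xb, v - xb⟫
    linarith [hsplit.ge, hsplit.le]
  -- distance to Y lower bound
  have hm : b - α * n ≤ ‖u - xplus‖ := by
    have h1 : infDist u Y ≤ dist u xplus := infDist_le_dist_of_mem hxplus.1
    have h2 : b ≤ infDist u Y + dist v u := infDist_le_infDist_add_dist
    have h3 : dist v u = α * n := by
      rw [dist_eq_norm, hu, show v - (v - α • g v) = α • g v by abel, norm_smul,
        Real.norm_eq_abs, abs_of_pos hα]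
    rw [dist_eq_norm] at h1
    linarith
  have hm0 : 0 ≤ ‖u - xplus‖ := norm_nonneg _
  have he0 : 0 ≤ α * n := mul_nonneg hα.le hn0
  have hmsq : (3 / 4) * b ^ 2 - 3 * α ^ 2 * n ^ 2 ≤ ‖u - xplus‖ ^ 2 := by
    rcases le_or_gt b (2 * (α * n)) with h | h
    · nlinarith [sq_nonneg (‖u - xplus‖)]
    · have hbe : 0 ≤ b - α * n := by linarith
      have hsq := mul_self_le_mul_self hbe hm
      nlinarith [sq_nonneg (b - 4 * (α * n))]
  -- bound on n
  have hnb : n ≤ G + L * a := by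
    have h1 : ‖g v - g xb‖ ≤ L * a := by rw [havx]; exact hLip v xb
    calc n = ‖g xb + (g v - g xb)‖ := by rw [hn]; congr 1; abel
      _ ≤ ‖g xb‖ + ‖g v - g xb‖ := norm_add_le _ _
      _ ≤ G + L * a := add_le_add (hG xb hxbX) h1
  have hn2 : α ^ 2 * n ^ 2 ≤ 2 * α ^ 2 * G ^ 2 + 2 * α ^ 2 * L ^ 2 * a ^ 2 := by
    have h5 : n ^ 2 ≤ 2 * G ^ 2 + 2 * L ^ 2 * a ^ 2 := by
      nlinarith [sq_nonneg (G - L * a), mul_nonneg hG0 (mul_nonneg hL ha0)]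
    nlinarith [mul_le_mul_of_nonneg_left h5 (sq_nonneg α)]
  -- Young's inequality
  have hyoung : 2 * α * G * a ≤ 3 / (8 * c) * a ^ 2 + 8 / 3 * c * α ^ 2 * G ^ 2 := by
    have key : 3 / (8 * c) * a ^ 2 + 8 / 3 * c * α ^ 2 * G ^ 2 - 2 * α * G * a
        = (3 * a - 8 * c * α * G) ^ 2 / (24 * c) := by
      field_simp
      ring
    nlinarith [div_nonneg (sq_nonneg (3 * a - 8 * c * α * G)) (by linarith : (0:ℝ) ≤ 24 * c)]
  -- chain: infDist xplus X ≤ ‖xb - xplus‖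
  have hfin : infDist xplus X ^ 2 ≤ ‖xb - xplus‖ ^ 2 := by
    have h1 : infDist xplus X ≤ ‖xb - xplus‖ := by
      rw [norm_sub_rev, ← dist_eq_norm]
      exact infDist_le_dist_of_mem hxbX
    exact pow_le_pow_left₀ infDist_nonneg h1 2
  have hcs2 : -(2 * (α * ⟪g v, v - xb⟫)) ≤ 2 * α * G * a + 2 * α * L * a ^ 2 := by
    nlinarith [mul_le_mul_of_nonneg_left hcs (by linarith : (0:ℝ) ≤ 2 * α)]
  have hfinal : infDist xplus X ^ 2 ≤
      a ^ 2 + 2 * α * G * a + 2 * α * L * a ^ 2 + 8 * α ^ 2 * G ^ 2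
        + 8 * L ^ 2 * α ^ 2 * a ^ 2 - 3 / 4 * b ^ 2 := by
    nlinarith [hfin, hproj, hexp.le, hexp.ge, hcs2, hmsq, hn2]
  have hyc : 8 / 3 * c * α ^ 2 * G ^ 2 ≤ 8 * c * α ^ 2 * G ^ 2 := by
    nlinarith [mul_nonneg (mul_nonneg hc.le (sq_nonneg α)) (sq_nonneg G)]
  have hextra : (0:ℝ) ≤ 16 * c * L ^ 2 * α ^ 2 * a ^ 2 := by positivity
  linarith [hfinal, hyoung, hyc, hextra]
end

section
/- Let X and Y be nonempty closed convex subsets of ℝ^d with X ⊆ Y. Let f: ℝ^d → ℝ be convex and differentiable with L-Lipschitz continuous gradient on ℝ^d, and suppose ‖∇f(x)‖ ≤ G for all x ∈ X. Let v ∈ ℝ^d, α > 0, and set x⁺ = Π_Y[v − α∇f(v)]. Then ‖x⁺ − v‖ ≤ (2 + αL) dist(v, X) + α G, and consequently ‖x⁺ − v‖² ≤ 2(2 + αL)² dist²(v, X) + 2α² G². -/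
open Metric RealInnerProductSpace

set_option maxHeartbeats 1000000

/-- **Step-length estimate for one random-projection gradient step.**
Let `X ⊆ Y ⊆ ℝ^d` be nonempty closed convex sets, `f` convex and differentiable with
`L`-Lipschitz gradient `g`, with `‖g x‖ ≤ G` on `X`.  If `x⁺ = Π_Y[v − α g(v)]`, then
`‖x⁺ − v‖ ≤ (2 + αL) dist(v, X) + αG` and
`‖x⁺ − v‖² ≤ 2(2 + αL)² dist²(v, X) + 2α²G²`. -/
theorem projected_gradient_step_estimate {d : ℕ}
    (X Y : Set (EuclideanSpace ℝ (Fin d)))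
    (hXne : X.Nonempty) (hXclosed : IsClosed X) (hXconvex : Convex ℝ X)
    (hYne : Y.Nonempty) (hYclosed : IsClosed Y) (hYconvex : Convex ℝ Y)
    (hXY : X ⊆ Y)
    (f : EuclideanSpace ℝ (Fin d) → ℝ)
    (g : EuclideanSpace ℝ (Fin d) → EuclideanSpace ℝ (Fin d))
    (hconv : ConvexOn ℝ Set.univ f)
    (hgrad : ∀ w, HasGradientAt f (g w) w)
    (L : ℝ) (hL : 0 ≤ L)
    (hLip : ∀ w w', ‖g w - g w'‖ ≤ L * ‖w - w'‖)
    (G : ℝ) (hG : ∀ x ∈ X, ‖g x‖ ≤ G)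
    (v xplus : EuclideanSpace ℝ (Fin d)) (α : ℝ) (hα : 0 < α)
    (hxplus : xplus ∈ Y ∧ ∀ w ∈ Y, ‖xplus - (v - α • g v)‖ ≤ ‖w - (v - α • g v)‖) :
    ‖xplus - v‖ ≤ (2 + α * L) * infDist v X + α * G ∧
      ‖xplus - v‖ ^ 2 ≤ 2 * (2 + α * L) ^ 2 * (infDist v X) ^ 2 + 2 * α ^ 2 * G ^ 2 := by
  obtain ⟨xb, hxbX, hxbd⟩ := hXclosed.exists_infDist_eq_dist hXne v
  set p : EuclideanSpace ℝ (Fin d) := v - α • g v with hp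
  set D : ℝ := infDist v X with hD
  have hDnn : 0 ≤ D := infDist_nonneg
  have hDv : ‖v - xb‖ = D := by rw [hxbd, dist_eq_norm]
  -- variational inequality for projection onto Y
  haveI : Nonempty Y := ⟨⟨xplus, hxplus.1⟩⟩
  have hbdd : BddBelow (Set.range fun w : Y => ‖p - (w : EuclideanSpace ℝ (Fin d))‖) :=
    ⟨0, by rintro _ ⟨w, rfl⟩; exact norm_nonneg _⟩
  have hmin : ‖p - xplus‖ = ⨅ w : Y, ‖p - w‖ := by
    apply le_antisymm
    · refine le_ciInf fun w => ?_
      rw [norm_sub_rev, norm_sub_rev p (w : EuclideanSpace ℝ (Fin d))]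
      exact hxplus.2 w w.2
    · exact ciInf_le hbdd ⟨xplus, hxplus.1⟩
  have hVI := (norm_eq_iInf_iff_real_inner_le_zero hYconvex hxplus.1).1 hmin
  have hVIxb : ⟪p - xplus, xb - xplus⟫ ≤ 0 := hVI xb (hXY hxbX)
  -- nonexpansiveness-style bound: ‖xplus - xb‖ ≤ ‖p - xb‖
  have key : ‖xplus - xb‖ ≤ ‖p - xb‖ := by
    have h1 : ‖xplus - xb‖ ^ 2 ≤ ⟪p - xb, xplus - xb⟫ := by
      have hsplit : ⟪p - xb, xplus - xb⟫
          = ⟪p - xplus, xplus - xb⟫ + ⟪xplus - xb, xplus - xb⟫ := by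
        rw [← inner_add_left]; congr 1; abel
      have h2 : 0 ≤ ⟪p - xplus, xplus - xb⟫ := by
        have hneg : ⟪p - xplus, xb - xplus⟫ = -⟪p - xplus, xplus - xb⟫ := by
          rw [← inner_neg_right]; congr 1; abel
        rw [hneg] at hVIxb; linarith
      have h3 : ⟪xplus - xb, xplus - xb⟫ = ‖xplus - xb‖ ^ 2 :=
        real_inner_self_eq_norm_sq _
      linarith
    have h4 : ⟪p - xb, xplus - xb⟫ ≤ ‖p - xb‖ * ‖xplus - xb‖ := real_inner_le_norm _ _
    nlinarith [norm_nonneg (xplus - xb), norm_nonneg (p - xb)]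
  -- gradient bound at v
  have hgv : ‖g v‖ ≤ G + L * D := by
    have := hLip v xb
    have := hG xb hxbX
    calc ‖g v‖ = ‖g xb + (g v - g xb)‖ := by congr 1; abel
      _ ≤ ‖g xb‖ + ‖g v - g xb‖ := norm_add_le _ _
      _ ≤ G + L * ‖v - xb‖ := add_le_add (hG xb hxbX) (hLip v xb)
      _ = G + L * D := by rw [hDv]
  have hGnn : 0 ≤ G := le_trans (norm_nonneg _) (hG xb hxbX)
  -- ‖p - xb‖ bound
  have hpb : ‖p - xb‖ ≤ D + α * ‖g v‖ := by
    have : p - xb = (v - xb) - α • g v := by rw [hp]; abel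
    rw [this]
    calc ‖(v - xb) - α • g v‖ ≤ ‖v - xb‖ + ‖α • g v‖ := norm_sub_le _ _
      _ = D + α * ‖g v‖ := by rw [hDv, norm_smul, Real.norm_eq_abs, abs_of_pos hα]
  have main : ‖xplus - v‖ ≤ (2 + α * L) * D + α * G := by
    calc ‖xplus - v‖ = ‖(xplus - xb) + (xb - v)‖ := by congr 1; abel
      _ ≤ ‖xplus - xb‖ + ‖xb - v‖ := norm_add_le _ _
      _ = ‖xplus - xb‖ + D := by rw [norm_sub_rev xb v, hDv]
      _ ≤ (D + α * ‖g v‖) + D := by linarith [le_trans key hpb]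
      _ ≤ (D + α * (G + L * D)) + D := by nlinarith [hα.le]
      _ = (2 + α * L) * D + α * G := by ring
  refine ⟨main, ?_⟩
  have h2 : (0:ℝ) ≤ (2 + α * L) * D := by positivity
  have h3 : (0:ℝ) ≤ α * G := by positivity
  nlinarith [norm_nonneg (xplus - v), main, sq_nonneg ((2 + α * L) * D - α * G)]
end

section
/- (Perturbed consensus) Let Assumptions on the network and weights hold (network connectivity with window Q and doubly stochastic weight matrices with entries bounded below by η on edges). For each i ∈ V let {θ_i(k)} ⊆ ℝ^d be generated by θ_i(k+1) = ∑_{j=1}^m [W(k)]_{ij} θ_j(k) + ε_i(k) for all k ≥ 0, where ε_i(k) ∈ ℝ^d. Suppose there exists a nonnegative non-increasing scalar sequence {α_k} such that ∑_{k=0}^∞ α_k ‖ε_i(k)‖ < ∞ for all i ∈ V. Then ∑_{k=0}^∞ α_k ‖θ_i(k) − θ_j(k)‖ < ∞ for all i, j ∈ V. -/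
/-!
Over any window of `B = m * Q` steps the backward product of the weights is row stochastic with
all entries at least `δ = η ^ B`: along each window of `Q` steps, connectivity forces an edge
from a node that has not yet received weight `η ^ n` from `j` into the set of nodes that have, so
that set grows. Two such rows give convex combinations that are `(1 - m δ)`-close relative to the
diameter `D k` of `{θ i k}`, whence `D (k + B) ≤ (1 - m δ) D k + 2 ∑ (noise over the window)`.
As `α` is non-increasing, `α k D k` obeys the same recursion with a summable forcing term, and
summing that recursion over `k` bounds the partial sums of `α k D k`.
-/

open Finset

theorem Relation.ReflTransGen.head_closed {α : Type*} {r : α → α → Prop} {p : α → Prop}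
    (hp : ∀ a b, r a b → p b → p a) {a b : α} (h : ReflTransGen r a b) (hb : p b) : p a := by
  induction h using Relation.ReflTransGen.head_induction_on with
  | refl => exact hb
  | head hac _ ih => exact hp _ _ hac ih

theorem Finset.eq_univ_of_ssubset_add {α : Type*} [Fintype α] {S : ℕ → Finset α} {Q : ℕ}
    (hS : Monotone S) (hgrow : ∀ n, S n ≠ univ → S n ⊂ S (n + Q)) :
    S (Fintype.card α * Q) = univ := by
  have hcard : ∀ t, S (t * Q) = univ ∨ t ≤ #(S (t * Q)) := by
    intro t
    induction t with
    | zero => simp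
    | succ t ih =>
      have hmono : S (t * Q) ≤ S ((t + 1) * Q) := hS (by nlinarith)
      by_cases h : S (t * Q) = univ
      · exact .inl (univ_subset_iff.mp (h ▸ hmono))
      · have hlt : #(S (t * Q)) < #(S ((t + 1) * Q)) := by
          rw [add_one_mul]
          exact card_lt_card (hgrow _ h)
        exact .inr (by have := ih.resolve_left h; omega)
  rcases hcard (Fintype.card α) with h | h
  · exact h
  · exact eq_univ_of_card _ (le_antisymm (card_le_univ _) h)

section TransitionProd

variable {ι : Type*} [Fintype ι] [DecidableEq ι] (W : ℕ → Matrix ι ι ℝ)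

/-- `transitionProd W s n = W (s + n - 1) * ⋯ * W s`. -/
def transitionProd (s : ℕ) : ℕ → Matrix ι ι ℝ
  | 0 => 1
  | n + 1 => W (s + n) * transitionProd s n

variable {W}

theorem transitionProd_succ_apply (s n : ℕ) (i j : ι) :
    transitionProd W s (n + 1) i j = ∑ l, W (s + n) i l * transitionProd W s n l j :=
  Matrix.mul_apply

theorem transitionProd_nonneg (hW0 : ∀ k i j, 0 ≤ W k i j) (s n : ℕ) (i j : ι) :
    0 ≤ transitionProd W s n i j := by
  induction n generalizing i j with
  | zero => by_cases h : i = j <;> simp [transitionProd, Matrix.one_apply, h]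
  | succ n ih =>
    rw [transitionProd_succ_apply]
    exact sum_nonneg fun l _ => mul_nonneg (hW0 _ _ _) (ih _ _)

theorem transitionProd_row_sum (hrow : ∀ k i, ∑ j, W k i j = 1) (s n : ℕ) (i : ι) :
    ∑ j, transitionProd W s n i j = 1 := by
  induction n generalizing i with
  | zero => simp [transitionProd, Matrix.one_apply]
  | succ n ih =>
    simp_rw [transitionProd_succ_apply]
    rw [sum_comm]
    simp_rw [← mul_sum, ih, mul_one, hrow]

section Mixing

variable {Ed : ℕ → ι → ι → Prop} {η : ℝ} (hW0 : ∀ k i j, 0 ≤ W k i j)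
  (hWη : ∀ k i j, Ed k i j → η ≤ W k i j) (hη : 0 ≤ η)
include hW0 hWη hη

theorem pow_le_transitionProd_succ_of_edge {s n : ℕ} {u w j : ι} (he : Ed (s + n) u w)
    (hw : η ^ n ≤ transitionProd W s n w j) :
    η ^ (n + 1) ≤ transitionProd W s (n + 1) u j := by
  rw [transitionProd_succ_apply, pow_succ']
  calc η * η ^ n ≤ W (s + n) u w * transitionProd W s n w j :=
        mul_le_mul (hWη _ _ _ he) hw (by positivity) (hW0 _ _ _)
    _ ≤ _ := single_le_sum (f := fun l => W (s + n) u l * transitionProd W s n l j)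
        (fun l _ => mul_nonneg (hW0 _ _ _) (transitionProd_nonneg hW0 _ _ _ _)) (mem_univ w)

theorem pow_le_transitionProd_of_le (hself : ∀ k i, Ed k i i) {s n n' : ℕ} (hn : n ≤ n')
    {u j : ι} (hu : η ^ n ≤ transitionProd W s n u j) :
    η ^ n' ≤ transitionProd W s n' u j := by
  induction n', hn using Nat.le_induction with
  | base => exact hu
  | succ n' _ ih => exact pow_le_transitionProd_succ_of_edge hW0 hWη hη (hself _ u) ih

theorem pow_le_transitionProd_card_mul (hself : ∀ k i, Ed k i i) {Q : ℕ}
    (hconn : ∀ k, ∀ i j : ι,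
      Relation.ReflTransGen (fun u w => ∃ ℓ < Q, Ed (k + ℓ) u w) i j)
    (s : ℕ) (i j : ι) :
    η ^ (Fintype.card ι * Q) ≤ transitionProd W s (Fintype.card ι * Q) i j := by
  classical
  set S : ℕ → Finset ι := fun n => univ.filter fun u => η ^ n ≤ transitionProd W s n u j
  have hmem : ∀ {n u}, u ∈ S n ↔ η ^ n ≤ transitionProd W s n u j := by simp [S]
  have hS : Monotone S := fun n n' hn u hu =>
    hmem.2 (pow_le_transitionProd_of_le hW0 hWη hη hself hn (hmem.1 hu))
  have hj : ∀ n, j ∈ S n := fun n => hS (Nat.zero_le n) (hmem.2 (by simp [transitionProd]))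
  have hgrow : ∀ n, S n ≠ univ → S n ⊂ S (n + Q) := by
    intro n hne
    obtain ⟨a, ha⟩ : ∃ a, a ∉ S n := by simpa [eq_univ_iff_forall] using hne
    obtain ⟨u, w, ⟨ℓ, hℓ, he⟩, hu, hw⟩ :
        ∃ u w, (∃ ℓ < Q, Ed (s + n + ℓ) u w) ∧ u ∉ S n ∧ w ∈ S n := by
      by_contra! h
      exact ha ((hconn (s + n) a j).head_closed (fun u w huw hw => by_contra (h u w huw · hw))
        (hj n))
    refine ssubset_of_subset_of_ne (hS (Nat.le_add_right n Q)) fun heq => hu ?_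
    refine heq ▸ hS (show n + ℓ + 1 ≤ n + Q by omega) (hmem.2 ?_)
    refine pow_le_transitionProd_succ_of_edge hW0 hWη hη (by rwa [← add_assoc]) ?_
    exact hmem.1 (hS (Nat.le_add_right n ℓ) hw)
  exact hmem.1 (Finset.eq_univ_of_ssubset_add hS hgrow ▸ mem_univ i)

end Mixing

end TransitionProd

section ConvexCombination

variable {ι E : Type*} [Fintype ι] [NormedAddCommGroup E] [NormedSpace ℝ E]

theorem norm_sum_smul_sub_sum_smul_le {c c' : ι → ℝ} {v : ι → E} {s D : ℝ}
    (hc : ∀ l, 0 ≤ c l) (hc' : ∀ l, 0 ≤ c' l) (hcs : ∑ l, c l = s)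
    (hc's : ∑ l, c' l = s)
    (hv : ∀ l l', ‖v l - v l'‖ ≤ D) :
    ‖∑ l, c l • v l - ∑ l, c' l • v l‖ ≤ s * D := by
  rcases (hcs ▸ sum_nonneg fun l _ => hc l : 0 ≤ s).eq_or_lt with rfl | hs
  · have h0 : ∀ {c : ι → ℝ}, (∀ l, 0 ≤ c l) → ∑ l, c l = 0 → c = 0 := fun hc h =>
      funext fun l => (sum_eq_zero_iff_of_nonneg fun l _ => hc l).1 h l (mem_univ l)
    simp [h0 hc hcs, h0 hc' hc's]
  have hpair : s • (∑ l, c l • v l - ∑ l, c' l • v l)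
      = ∑ l, ∑ l', (c l * c' l') • (v l - v l') := by
    simp_rw [smul_sub, sum_sub_distrib, mul_smul, ← smul_sum, ← sum_smul, hc's, hcs,
      smul_sum, smul_comm s]
  have hbound : s * ‖∑ l, c l • v l - ∑ l, c' l • v l‖ ≤ s * (s * D) :=
    calc s * ‖∑ l, c l • v l - ∑ l, c' l • v l‖
        = ‖∑ l, ∑ l', (c l * c' l') • (v l - v l')‖ := by
          rw [← hpair, norm_smul, Real.norm_of_nonneg hs.le]
      _ ≤ ∑ l, ∑ l', c l * c' l' * D := by
          refine (norm_sum_le _ _).trans (sum_le_sum fun l _ => (norm_sum_le _ _).trans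
            (sum_le_sum fun l' _ => ?_))
          rw [norm_smul, Real.norm_of_nonneg (mul_nonneg (hc l) (hc' l'))]
          exact mul_le_mul_of_nonneg_left (hv l l') (mul_nonneg (hc l) (hc' l'))
      _ = s * (s * D) := by simp_rw [mul_assoc, ← mul_sum, ← sum_mul, hc's, hcs]
  exact le_of_mul_le_mul_left hbound hs

theorem norm_sum_smul_sub_sum_smul_le_of_ge {a b : ι → ℝ} {v : ι → E} {δ D : ℝ}
    (ha : ∀ l, δ ≤ a l) (hb : ∀ l, δ ≤ b l) (ha1 : ∑ l, a l = 1) (hb1 : ∑ l, b l = 1)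
    (hv : ∀ l l', ‖v l - v l'‖ ≤ D) :
    ‖∑ l, a l • v l - ∑ l, b l • v l‖ ≤ (1 - Fintype.card ι * δ) * D := by
  have hsum : ∀ {a : ι → ℝ}, ∑ l, a l = 1 →
      ∑ l, (a l - δ) = 1 - Fintype.card ι * δ := by
    intro a ha1
    simp [sum_sub_distrib, ha1]
  convert norm_sum_smul_sub_sum_smul_le (fun l => sub_nonneg.2 (ha l))
    (fun l => sub_nonneg.2 (hb l)) (hsum ha1) (hsum hb1) hv using 2
  simp only [sub_smul, sum_sub_distrib]
  abel

end ConvexCombination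

theorem summable_of_le_mul_add_shift {z g : ℕ → ℝ} {B : ℕ} {r : ℝ} (hz : ∀ n, 0 ≤ z n)
    (hg : ∀ n, 0 ≤ g n) (hgs : Summable g) (hr : r < 1)
    (h : ∀ n, z (n + B) ≤ r * z n + g n) : Summable z := by
  refine summable_of_sum_range_le hz (c := (∑ n ∈ range B, z n + ∑' n, g n) / (1 - r))
    fun N => ?_
  rw [le_div_iff₀ (sub_pos.2 hr)]
  have hshift : ∑ n ∈ range N, z n ≤ ∑ n ∈ range B, z n + ∑ n ∈ range N, z (n + B) :=
    calc _ ≤ ∑ n ∈ range (B + N), z n :=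
          sum_le_sum_of_subset_of_nonneg (range_mono (by omega)) fun n _ _ => hz n
      _ = _ := by simp_rw [sum_range_add, add_comm B]
  have hstep : ∑ n ∈ range N, z (n + B) ≤ r * ∑ n ∈ range N, z n + ∑' n, g n :=
    calc _ ≤ ∑ n ∈ range N, (r * z n + g n) := sum_le_sum fun n _ => h n
      _ ≤ _ := by
          rw [sum_add_distrib, ← mul_sum]
          gcongr
          exact hgs.sum_le_tsum _ fun n _ => hg n
  linarith

section PerturbedIteration

open Metric

variable {ι E : Type*} [Fintype ι] [DecidableEq ι] [NormedAddCommGroup E] [NormedSpace ℝ E]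
  {W : ℕ → Matrix ι ι ℝ} {θ ε : ι → ℕ → E} (hW0 : ∀ k i j, 0 ≤ W k i j)
  (hrow : ∀ k i, ∑ j, W k i j = 1)
  (hrec : ∀ i k, θ i (k + 1) = (∑ j, W k i j • θ j k) + ε i k)
include hW0 hrow hrec

theorem norm_sub_sum_transitionProd_smul_le (s n : ℕ) (i : ι) :
    ‖θ i (s + n) - ∑ j, transitionProd W s n i j • θ j s‖
      ≤ ∑ t ∈ range n, ∑ l, ‖ε l (s + t)‖ := by
  induction n generalizing i with
  | zero => simp [transitionProd, Matrix.one_apply]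
  | succ n ih =>
    have hexp : ∑ j, transitionProd W s (n + 1) i j • θ j s
        = ∑ l, W (s + n) i l • ∑ j, transitionProd W s n l j • θ j s := by
      simp_rw [transitionProd_succ_apply, sum_smul, smul_sum, mul_smul]
      exact sum_comm
    have hdiff : θ i (s + (n + 1)) - ∑ j, transitionProd W s (n + 1) i j • θ j s
        = ∑ l, W (s + n) i l • (θ l (s + n) - ∑ j, transitionProd W s n l j • θ j s)
          + ε i (s + n) := by
      rw [← add_assoc, hrec, hexp]
      simp_rw [smul_sub, sum_sub_distrib]
      abel
    rw [hdiff, sum_range_succ]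
    refine (norm_add_le _ _).trans (add_le_add ?_ ?_)
    · exact mem_closedBall_zero_iff.1 <| (convex_closedBall (0 : E) _).sum_mem
        (fun l _ => hW0 _ _ _) (hrow _ _) fun l _ => mem_closedBall_zero_iff.2 (ih l)
    · exact single_le_sum (f := fun l => ‖ε l (s + n)‖) (fun l _ => norm_nonneg _)
        (mem_univ i)

theorem diam_range_add_le [Nonempty ι] {B : ℕ} {δ : ℝ}
    (hδ : ∀ s i j, δ ≤ transitionProd W s B i j) (s : ℕ) :
    diam (Set.range fun i => θ i (s + B))
      ≤ (1 - Fintype.card ι * δ) * diam (Set.range fun i => θ i s)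
        + 2 * ∑ t ∈ range B, ∑ l, ‖ε l (s + t)‖ := by
  refine diam_le_of_forall_dist_le_of_nonempty (Set.range_nonempty _) ?_
  rintro _ ⟨a, rfl⟩ _ ⟨b, rfl⟩
  set ψ : ι → E := fun i => ∑ j, transitionProd W s B i j • θ j s
  have herr := norm_sub_sum_transitionProd_smul_le hW0 hrow hrec s B
  have hψ : ‖ψ a - ψ b‖ ≤ (1 - Fintype.card ι * δ) * diam (Set.range fun i => θ i s) :=
    norm_sum_smul_sub_sum_smul_le_of_ge (hδ s a) (hδ s b) (transitionProd_row_sum hrow s B a)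
      (transitionProd_row_sum hrow s B b) fun l l' => dist_eq_norm (θ l s) (θ l' s) ▸
        dist_le_diam_of_mem (Set.finite_range _).isBounded (Set.mem_range_self l)
          (Set.mem_range_self l')
  calc dist (θ a (s + B)) (θ b (s + B))
      = ‖(θ a (s + B) - ψ a) + (ψ a - ψ b) - (θ b (s + B) - ψ b)‖ := by
        rw [dist_eq_norm]
        congr 1
        abel
    _ ≤ ‖θ a (s + B) - ψ a‖ + ‖ψ a - ψ b‖ + ‖θ b (s + B) - ψ b‖ :=
        (norm_sub_le _ _).trans (by gcongr; exact norm_add_le _ _)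
    _ ≤ _ := by linarith [herr a, herr b]

theorem summable_mul_diam_range [Nonempty ι] {B : ℕ} {δ : ℝ} (hδ0 : 0 < δ)
    (hδ : ∀ s i j, δ ≤ transitionProd W s B i j) {α : ℕ → ℝ} (hα0 : ∀ k, 0 ≤ α k)
    (hα : Antitone α) (hsum : ∀ i, Summable fun k => α k * ‖ε i k‖) :
    Summable fun k => α k * diam (Set.range fun i => θ i k) := by
  set r := 1 - Fintype.card ι * δ
  have hr0 : 0 ≤ r := by
    have hrow_ge : ∑ _j : ι, δ ≤ ∑ j, transitionProd W 0 B (Classical.arbitrary ι) j :=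
      sum_le_sum fun j _ => hδ 0 _ j
    rw [transitionProd_row_sum hrow, sum_const, card_univ, nsmul_eq_mul] at hrow_ge
    linarith
  have hr1 : r < 1 := sub_lt_self _ (mul_pos (Nat.cast_pos.2 Fintype.card_pos) hδ0)
  set f : ℕ → ℝ := fun k => α k * ∑ l, ‖ε l k‖
  have hf : Summable f := by
    simp_rw [f, mul_sum]
    exact summable_sum fun l _ => hsum l
  refine summable_of_le_mul_add_shift (B := B) (r := r)
    (g := fun s => 2 * ∑ t ∈ range B, f (s + t))
    (fun k => mul_nonneg (hα0 k) diam_nonneg)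
    (fun s => mul_nonneg zero_le_two (sum_nonneg fun t _ =>
      mul_nonneg (hα0 _) (sum_nonneg fun l _ => norm_nonneg _)))
    ((summable_sum fun t _ => (summable_nat_add_iff t).2 hf).mul_left 2) hr1 fun s => ?_
  have hdecay : α (s + B) * (r * diam (Set.range fun i => θ i s))
      ≤ r * (α s * diam (Set.range fun i => θ i s)) := by
    rw [mul_left_comm]
    gcongr
    exact hα (Nat.le_add_right s B)
  have hnoise : α (s + B) * (2 * ∑ t ∈ range B, ∑ l, ‖ε l (s + t)‖)
      ≤ 2 * ∑ t ∈ range B, f (s + t) := by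
    rw [mul_left_comm, mul_sum]
    gcongr with t ht
    exact mul_le_mul_of_nonneg_right (hα (by simp only [Finset.mem_range] at ht; omega))
      (sum_nonneg fun l _ => norm_nonneg _)
  calc α (s + B) * diam (Set.range fun i => θ i (s + B))
      ≤ α (s + B) * (r * diam (Set.range fun i => θ i s)
          + 2 * ∑ t ∈ range B, ∑ l, ‖ε l (s + t)‖) :=
        mul_le_mul_of_nonneg_left (diam_range_add_le hW0 hrow hrec hδ s) (hα0 _)
    _ ≤ _ := by
        rw [mul_add]
        exact add_le_add hdecay hnoise

end PerturbedIteration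

theorem perturbed_consensus_general {d m : ℕ}
    (Ed : ℕ → Fin m → Fin m → Prop)
    (W : ℕ → Matrix (Fin m) (Fin m) ℝ)
    (hself : ∀ k i, Ed k i i)
    (hW0 : ∀ k i j, 0 ≤ W k i j)
    (hrow : ∀ k i, ∑ j, W k i j = 1)
    (η : ℝ) (hη0 : 0 < η)
    (hWη : ∀ k i j, Ed k i j → η ≤ W k i j)
    (Q : ℕ)
    (hconn : ∀ k, ∀ i j : Fin m,
      Relation.ReflTransGen (fun u w => ∃ ℓ < Q, Ed (k + ℓ) u w) i j)
    (θ ε : Fin m → ℕ → EuclideanSpace ℝ (Fin d))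
    (hrec : ∀ i k, θ i (k + 1) = (∑ j, W k i j • θ j k) + ε i k)
    (α : ℕ → ℝ) (hα0 : ∀ k, 0 ≤ α k) (hαmono : ∀ k, α (k + 1) ≤ α k)
    (hsum : ∀ i, Summable fun k => α k * ‖ε i k‖) :
    ∀ i j, Summable fun k => α k * ‖θ i k - θ j k‖ := by
  intro i j
  have : Nonempty (Fin m) := ⟨i⟩
  have hmix : ∀ s a b, η ^ (m * Q) ≤ transitionProd W s (m * Q) a b := fun s a b => by
    simpa using pow_le_transitionProd_card_mul hW0 hWη hη0.le hself hconn s a b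
  refine (summable_mul_diam_range hW0 hrow hrec (pow_pos hη0 _) hmix hα0
    (antitone_nat_of_succ_le hαmono) hsum).of_nonneg_of_le
    (fun k => mul_nonneg (hα0 k) (norm_nonneg _)) fun k => mul_le_mul_of_nonneg_left ?_ (hα0 k)
  rw [← dist_eq_norm]
  exact Metric.dist_le_diam_of_mem (Set.finite_range _).isBounded (Set.mem_range_self i)
    (Set.mem_range_self j)

/-- **Perturbed consensus** (Lemma 8, adapted from Ram–Nedić–Veeravalli).
Under network connectivity (window `Q`) and doubly stochastic weights bounded below by
`η` on edges, if `θ i (k+1) = ∑ j [W k]_{ij} • θ j k + ε i k` and there is a nonnegative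
non-increasing sequence `{α k}` with `∑ k α k ‖ε i k‖ < ∞` for all `i`, then
`∑ k α k ‖θ i k − θ j k‖ < ∞` for all `i, j`. -/
theorem perturbed_consensus {d m : ℕ} (hm : 0 < m)
    (Ed : ℕ → Fin m → Fin m → Prop)
    (W : ℕ → Matrix (Fin m) (Fin m) ℝ)
    (hself : ∀ k i, Ed k i i)
    (hW0 : ∀ k i j, 0 ≤ W k i j)
    (hWsupp : ∀ k i j, ¬ Ed k i j → W k i j = 0)
    (hrow : ∀ k i, ∑ j, W k i j = 1)
    (hcol : ∀ k j, ∑ i, W k i j = 1)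
    (η : ℝ) (hη0 : 0 < η) (hη1 : η < 1)
    (hWη : ∀ k i j, Ed k i j → η ≤ W k i j)
    (Q : ℕ) (hQ : 1 ≤ Q)
    (hconn : ∀ k, ∀ i j : Fin m,
      Relation.ReflTransGen (fun u w => ∃ ℓ < Q, Ed (k + ℓ) u w) i j)
    (θ ε : Fin m → ℕ → EuclideanSpace ℝ (Fin d))
    (hrec : ∀ i k, θ i (k + 1) = (∑ j, W k i j • θ j k) + ε i k)
    (α : ℕ → ℝ) (hα0 : ∀ k, 0 ≤ α k) (hαmono : ∀ k, α (k + 1) ≤ α k)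
    (hsum : ∀ i, Summable fun k => α k * ‖ε i k‖) :
    ∀ i j, Summable fun k => α k * ‖θ i k - θ j k‖ :=
  perturbed_consensus_general Ed W hself hW0 hrow η hη0 hWη Q hconn θ ε hrec α hα0 hαmono hsum
end

section
/- (Basic iterate relation for a mini-batch of projections) Let X ⊆ ℝ^d be a nonempty closed convex set and let Y_1,…,Y_b ⊆ ℝ^d be closed convex sets each containing X. Let f: ℝ^d → ℝ be convex and differentiable with L-Lipschitz continuous gradient on ℝ^d, and suppose ‖∇f(x)‖ ≤ G for all x ∈ X. Let v ∈ ℝ^d, α > 0, and define ψ⁰ = v − α∇f(v), ψ^r = Π_{Y_r}[ψ^{r−1}] for r = 1,…,b, and x⁺ = ψ^b. Then for any x̌ ∈ X, any z ∈ ℝ^d and any τ > 0: ‖x⁺ − x̌‖² ≤ (1 + A_τ α²)‖v − x̌‖² − 2α(f(z) − f(x̌)) − (3/4)‖ψ¹ − v‖² + (3/(8τ) + 2αL)‖v − z‖² + B_τ α² G², where A_τ = 8L² + 16τL² and B_τ = 8τ + 8. -/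
/-!
Every projection onto a convex set containing `x̌` moves the iterate closer to `x̌`, so
`‖x⁺ − x̌‖ ≤ ‖ψ 1 − x̌‖`, and the first projection satisfies the obtuse-angle inequality
`‖ψ 1 − x̌‖² + ‖ψ 1 − ψ 0‖² ≤ ‖ψ 0 − x̌‖²`. Expanding `ψ 0 = v − α∇f(v)`, the cross term
`−2α⟨∇f(v), v − x̌⟩` is bounded by convexity at `v`, and `f(v)` is traded for `f(z)` by convexity
at `z` together with `‖∇f(z)‖ ≤ ‖∇f(v)‖ + L‖v − z‖`. The distance `‖ψ 1 − ψ 0‖²` pays for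
`(3/4)‖ψ 1 − v‖²` up to `3α²‖∇f(v)‖²`; all terms in `α‖∇f(v)‖` are then absorbed by Young's
inequality and `‖∇f(v)‖ ≤ G + L‖v − x̌‖`.
-/

open scoped RealInnerProductSpace

variable {E : Type*} [NormedAddCommGroup E]

theorem three_div_four_mul_norm_sub_sq_le (a b : E) :
    3 / 4 * ‖a - b‖ ^ 2 ≤ ‖a‖ ^ 2 + 3 * ‖b‖ ^ 2 := by
  nlinarith [norm_sub_le a b, norm_nonneg (a - b), sq_nonneg (‖a‖ - 3 * ‖b‖)]

variable [InnerProductSpace ℝ E]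

/-- `p` is a nearest point of `K` to `c`, i.e. `p = Π_K[c]` when `K` is closed and convex. -/
def IsMetricProjection (K : Set E) (c p : E) : Prop :=
  p ∈ K ∧ ∀ u ∈ K, ‖p - c‖ ≤ ‖u - c‖

theorem norm_sub_smul_sq (x g : E) (α : ℝ) :
    ‖x - α • g‖ ^ 2 = ‖x‖ ^ 2 - 2 * α * ⟪g, x⟫ + α ^ 2 * ‖g‖ ^ 2 := by
  rw [norm_sub_sq_real, inner_smul_right, real_inner_comm, norm_smul, Real.norm_eq_abs, mul_pow,
    sq_abs]
  ring

namespace IsMetricProjection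

variable {K : Set E} {c p w : E}

theorem inner_sub_sub_nonpos (hK : Convex ℝ K) (h : IsMetricProjection K c p) (hw : w ∈ K) :
    ⟪c - p, w - p⟫ ≤ 0 := by
  have : Nonempty K := ⟨⟨p, h.1⟩⟩
  have hbdd : BddBelow (Set.range fun u : K => ‖c - u‖) :=
    ⟨0, Set.forall_mem_range.2 fun _ => norm_nonneg _⟩
  refine (norm_eq_iInf_iff_real_inner_le_zero hK h.1).mp ?_ w hw
  refine le_antisymm (le_ciInf fun u => ?_) (ciInf_le hbdd ⟨p, h.1⟩)
  simpa only [norm_sub_rev c] using h.2 u u.2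

theorem norm_sub_sq_add_norm_sub_sq_le (hK : Convex ℝ K) (h : IsMetricProjection K c p)
    (hw : w ∈ K) : ‖p - w‖ ^ 2 + ‖p - c‖ ^ 2 ≤ ‖c - w‖ ^ 2 := by
  have hobtuse := h.inner_sub_sub_nonpos hK hw
  have hexpand := norm_sub_sq_real (c - p) (w - p)
  rw [sub_sub_sub_cancel_right] at hexpand
  rw [norm_sub_rev p w, norm_sub_rev p c]
  linarith

theorem norm_sub_le (hK : Convex ℝ K) (h : IsMetricProjection K c p) (hw : w ∈ K) :
    ‖p - w‖ ≤ ‖c - w‖ :=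
  (sq_le_sq₀ (norm_nonneg _) (norm_nonneg _)).mp <| by
    nlinarith [h.norm_sub_sq_add_norm_sub_sq_le hK hw]

theorem norm_sub_sq_le_of_gradient_step (hK : Convex ℝ K) {v g : E} {α : ℝ}
    (h : IsMetricProjection K (v - α • g) p) (hw : w ∈ K) :
    ‖p - w‖ ^ 2 ≤ ‖v - w‖ ^ 2 - 2 * α * ⟪g, v - w⟫ + 4 * α ^ 2 * ‖g‖ ^ 2 - 3 / 4 * ‖p - v‖ ^ 2 := by
  have hproj := h.norm_sub_sq_add_norm_sub_sq_le hK hw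
  have hexpand := norm_sub_smul_sq (v - w) g α
  have hstep := three_div_four_mul_norm_sub_sq_le (p - (v - α • g)) (α • g)
  rw [sub_right_comm] at hexpand
  rw [show p - (v - α • g) - α • g = p - v by abel, norm_smul, Real.norm_eq_abs, mul_pow,
    sq_abs] at hstep
  linarith

end IsMetricProjection

theorem norm_sub_le_of_isMetricProjection_succ {Y : ℕ → Set E} {ψ : ℕ → E} {x : E} {b : ℕ}
    (hY : ∀ r, 1 ≤ r → r ≤ b → Convex ℝ (Y r)) (hx : ∀ r, 1 ≤ r → r ≤ b → x ∈ Y r)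
    (hψ : ∀ r, 1 ≤ r → r ≤ b → IsMetricProjection (Y r) (ψ (r - 1)) (ψ r)) (hb : 1 ≤ b) :
    ‖ψ b - x‖ ≤ ‖ψ 1 - x‖ := by
  suffices ∀ r, 1 ≤ r → r ≤ b → ‖ψ r - x‖ ≤ ‖ψ 1 - x‖ from this b hb le_rfl
  intro r hr
  induction r, hr using Nat.le_induction with
  | base => exact fun _ => le_rfl
  | succ r hr ih =>
    intro hrb
    have hstep := (hψ (r + 1) (by omega) hrb).norm_sub_le (hY _ (by omega) hrb)
      (hx _ (by omega) hrb)
    rw [Nat.add_sub_cancel] at hstep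
    exact hstep.trans (ih (by omega))

theorem ConvexOn.sub_le_inner_of_hasGradientAt [CompleteSpace E] {f : E → ℝ} {g w : E}
    (hf : ConvexOn ℝ Set.univ f) (hg : HasGradientAt f g w) (y : E) :
    f w - f y ≤ ⟪g, w - y⟫ := by
  let ℓ : ℝ →ᵃ[ℝ] E := AffineMap.lineMap w y
  have hline : ∀ t : ℝ, ℓ t = t • (y - w) + w := fun t => by
    simp [ℓ, AffineMap.lineMap_apply]
  have hφ : ConvexOn ℝ Set.univ (f ∘ ℓ) := by
    simpa only [Set.preimage_univ] using hf.comp_affineMap ℓ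
  have hderiv : HasDerivAt (f ∘ ℓ) ⟪g, y - w⟫ 0 := by
    have hf' : HasFDerivAt f (InnerProductSpace.toDual ℝ E g) (ℓ 0) := by
      simpa [hline] using hg.hasFDerivAt
    have hl : HasDerivAt ℓ (y - w) 0 := AffineMap.hasDerivAt_lineMap
    simpa [InnerProductSpace.toDual_apply_apply] using hf'.comp_hasDerivAt 0 hl
  have hslope := hφ.le_slope_of_hasDerivAt (Set.mem_univ 0) (Set.mem_univ 1) one_pos hderiv
  simp only [slope_def_field, Function.comp_apply, hline, one_smul, sub_add_cancel, zero_smul,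
    zero_add, sub_zero, div_one] at hslope
  rw [← neg_sub w y, inner_neg_right] at hslope
  linarith

theorem sub_le_of_hasGradientAt_of_norm_sub_le [CompleteSpace E] {f : E → ℝ} {gz gv z v : E}
    {L : ℝ} (hf : ConvexOn ℝ Set.univ f) (hz : HasGradientAt f gz z)
    (hLip : ‖gz - gv‖ ≤ L * ‖z - v‖) :
    f z - f v ≤ ‖gv‖ * ‖z - v‖ + L * ‖z - v‖ ^ 2 := by
  have hconv := hf.sub_le_inner_of_hasGradientAt hz v
  have hinner : ⟪gz, z - v⟫ ≤ ‖gz‖ * ‖z - v‖ := real_inner_le_norm _ _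
  have hgz : ‖gz‖ ≤ ‖gv‖ + L * ‖z - v‖ := by
    calc ‖gz‖ ≤ ‖gv‖ + ‖gz - gv‖ := norm_le_insert' gz gv
      _ ≤ ‖gv‖ + L * ‖z - v‖ := by linarith
  linarith [mul_le_mul_of_nonneg_right hgz (norm_nonneg (z - v))]

theorem two_mul_mul_le_weighted_sq_add_sq {τ : ℝ} (hτ : 0 < τ) (x y : ℝ) :
    2 * x * y ≤ 3 / (8 * τ) * y ^ 2 + 8 * τ / 3 * x ^ 2 := by
  have hsq : 0 ≤ 3 / (8 * τ) * (y - 8 * τ / 3 * x) ^ 2 := by positivity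
  have hexp : 3 / (8 * τ) * (y - 8 * τ / 3 * x) ^ 2
      = 3 / (8 * τ) * y ^ 2 + 8 * τ / 3 * x ^ 2 - 2 * x * y := by
    field_simp
    ring
  linarith

theorem minibatch_basic_iterate_relation_general {d : ℕ} (b : ℕ) (hb : 1 ≤ b)
    (X : Set (EuclideanSpace ℝ (Fin d)))
    (Y : ℕ → Set (EuclideanSpace ℝ (Fin d)))
    (hYconvex : ∀ r, 1 ≤ r → r ≤ b → Convex ℝ (Y r))
    (hXY : ∀ r, 1 ≤ r → r ≤ b → X ⊆ Y r)
    (f : EuclideanSpace ℝ (Fin d) → ℝ)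
    (g : EuclideanSpace ℝ (Fin d) → EuclideanSpace ℝ (Fin d))
    (hconv : ConvexOn ℝ Set.univ f)
    (hgrad : ∀ w, HasGradientAt f (g w) w)
    (L : ℝ)
    (hLip : ∀ w w', ‖g w - g w'‖ ≤ L * ‖w - w'‖)
    (G : ℝ) (hG : ∀ x ∈ X, ‖g x‖ ≤ G)
    (v : EuclideanSpace ℝ (Fin d)) (α : ℝ) (hα : 0 < α)
    (ψ : ℕ → EuclideanSpace ℝ (Fin d))
    (hψ0 : ψ 0 = v - α • g v)
    (hψ : ∀ r, 1 ≤ r → r ≤ b →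
      ψ r ∈ Y r ∧ ∀ w ∈ Y r, ‖ψ r - ψ (r - 1)‖ ≤ ‖w - ψ (r - 1)‖)
    (xch : EuclideanSpace ℝ (Fin d)) (hxch : xch ∈ X)
    (z : EuclideanSpace ℝ (Fin d)) (τ : ℝ) (hτ : 0 < τ) :
    ‖ψ b - xch‖ ^ 2 ≤ (1 + (8 * L ^ 2 + 16 * τ * L ^ 2) * α ^ 2) * ‖v - xch‖ ^ 2
      - 2 * α * (f z - f xch) - (3 / 4) * ‖ψ 1 - v‖ ^ 2
      + (3 / (8 * τ) + 2 * α * L) * ‖v - z‖ ^ 2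
      + (8 * τ + 8) * α ^ 2 * G ^ 2 := by
  have hx : ∀ r, 1 ≤ r → r ≤ b → xch ∈ Y r := fun r h1 h2 => hXY r h1 h2 hxch
  have hlater : ‖ψ b - xch‖ ≤ ‖ψ 1 - xch‖ :=
    norm_sub_le_of_isMetricProjection_succ hYconvex hx hψ hb
  have hproj₁ : IsMetricProjection (Y 1) (ψ 0) (ψ 1) := hψ 1 le_rfl hb
  rw [hψ0] at hproj₁
  have hfirst := hproj₁.norm_sub_sq_le_of_gradient_step (hYconvex 1 le_rfl hb) (hx 1 le_rfl hb)
  have hfv := hconv.sub_le_inner_of_hasGradientAt (hgrad v) xch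
  have hfz : f z - f v ≤ ‖g v‖ * ‖v - z‖ + L * ‖v - z‖ ^ 2 := by
    simpa only [norm_sub_rev z v] using
      sub_le_of_hasGradientAt_of_norm_sub_le hconv (hgrad z) (hLip z v)
  have hgv : ‖g v‖ ≤ G + L * ‖v - xch‖ :=
    (norm_le_insert' (g v) (g xch)).trans (add_le_add (hG xch hxch) (hLip v xch))
  have hgv_sq : ‖g v‖ ^ 2 ≤ 2 * G ^ 2 + 2 * L ^ 2 * ‖v - xch‖ ^ 2 := by
    linarith [pow_le_pow_left₀ (norm_nonneg _) hgv 2, sq_nonneg (G - L * ‖v - xch‖)]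
  have hyoung := two_mul_mul_le_weighted_sq_add_sq hτ (α * ‖g v‖) ‖v - z‖
  linarith [pow_le_pow_left₀ (norm_nonneg _) hlater 2, mul_le_mul_of_nonneg_left hfv hα.le,
    mul_le_mul_of_nonneg_left hfz hα.le,
    mul_le_mul_of_nonneg_left hgv_sq (by positivity : 0 ≤ (8 * τ / 3 + 4) * α ^ 2),
    mul_nonneg hτ.le (sq_nonneg (L * α * ‖v - xch‖)), mul_nonneg hτ.le (sq_nonneg (α * G))]

/-- **Basic iterate relation for a mini-batch of successive projections.**
Let `X ⊆ ℝ^d` be nonempty closed convex and `Y 1, …, Y b` closed convex sets containing `X`.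
Let `f` be convex and differentiable with `L`-Lipschitz gradient `g` and `‖g x‖ ≤ G` on `X`.
Starting from `ψ 0 = v − α g(v)` and successively projecting, `ψ r = Π_{Y r}[ψ (r−1)]`,
the final point `x⁺ = ψ b` satisfies, for any `x̌ ∈ X`, `z ∈ ℝ^d` and `τ > 0`,
`‖x⁺ − x̌‖² ≤ (1 + A_τ α²)‖v − x̌‖² − 2α(f(z) − f(x̌)) − (3/4)‖ψ 1 − v‖²
  + (3/(8τ) + 2αL)‖v − z‖² + B_τ α² G²`
with `A_τ = 8L² + 16τL²`, `B_τ = 8τ + 8`. -/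
theorem minibatch_basic_iterate_relation {d : ℕ} (b : ℕ) (hb : 1 ≤ b)
    (X : Set (EuclideanSpace ℝ (Fin d)))
    (hXne : X.Nonempty) (hXclosed : IsClosed X) (hXconvex : Convex ℝ X)
    (Y : ℕ → Set (EuclideanSpace ℝ (Fin d)))
    (hYclosed : ∀ r, 1 ≤ r → r ≤ b → IsClosed (Y r))
    (hYconvex : ∀ r, 1 ≤ r → r ≤ b → Convex ℝ (Y r))
    (hXY : ∀ r, 1 ≤ r → r ≤ b → X ⊆ Y r)
    (f : EuclideanSpace ℝ (Fin d) → ℝ)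
    (g : EuclideanSpace ℝ (Fin d) → EuclideanSpace ℝ (Fin d))
    (hconv : ConvexOn ℝ Set.univ f)
    (hgrad : ∀ w, HasGradientAt f (g w) w)
    (L : ℝ) (hL : 0 ≤ L)
    (hLip : ∀ w w', ‖g w - g w'‖ ≤ L * ‖w - w'‖)
    (G : ℝ) (hG : ∀ x ∈ X, ‖g x‖ ≤ G)
    (v : EuclideanSpace ℝ (Fin d)) (α : ℝ) (hα : 0 < α)
    (ψ : ℕ → EuclideanSpace ℝ (Fin d))
    (hψ0 : ψ 0 = v - α • g v)
    (hψ : ∀ r, 1 ≤ r → r ≤ b →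
      ψ r ∈ Y r ∧ ∀ w ∈ Y r, ‖ψ r - ψ (r - 1)‖ ≤ ‖w - ψ (r - 1)‖)
    (xch : EuclideanSpace ℝ (Fin d)) (hxch : xch ∈ X)
    (z : EuclideanSpace ℝ (Fin d)) (τ : ℝ) (hτ : 0 < τ) :
    ‖ψ b - xch‖ ^ 2 ≤ (1 + (8 * L ^ 2 + 16 * τ * L ^ 2) * α ^ 2) * ‖v - xch‖ ^ 2
      - 2 * α * (f z - f xch) - (3 / 4) * ‖ψ 1 - v‖ ^ 2
      + (3 / (8 * τ) + 2 * α * L) * ‖v - z‖ ^ 2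
      + (8 * τ + 8) * α ^ 2 * G ^ 2 :=
  minibatch_basic_iterate_relation_general b hb X Y hYconvex hXY f g hconv hgrad L hLip G hG v α hα
    ψ hψ0 hψ xch hxch z τ hτ
end
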